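/- arXiv:1903.08618 — 7 statements merged into one kernel-verified Lean document; each statement's English description precedes it below -/
import Mathlib

section
/- Let Q be an n×n real symmetric positive definite matrix with spectral condition number k_Q (the ratio of its largest to its smallest eigenvalue), and let Γ be a diagonal matrix with diagonal entries γ_1, …, γ_n. If every diagonal entry satisfies γ_i ∈ ((√k_Q − 1)/(‖Q‖₂ √k_Q), (√k_Q + 1)/(‖Q‖₂ √k_Q)), then ‖I − ΓQ‖₂ < 1. -/
open Matrix Filter Topology

variable {n : ℕ}

/-- Largest eigenvalue of a Hermitian real matrix. -/
noncomputable def maxEig {M : Matrix (Fin n) (Fin n) ℝ} (hM : M.IsHermitian) : ℝ :=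
  ⨆ i, hM.eigenvalues i

/-- Smallest eigenvalue of a Hermitian real matrix. -/
noncomputable def minEig {M : Matrix (Fin n) (Fin n) ℝ} (hM : M.IsHermitian) : ℝ :=
  ⨅ i, hM.eigenvalues i

/-- Spectral norm (ℓ² operator norm) of a real matrix. -/
noncomputable def spec (M : Matrix (Fin n) (Fin n) ℝ) : ℝ :=
  ‖LinearMap.toContinuousLinearMap (Matrix.toEuclideanLin M)‖

/-- Euclidean norm of a vector. -/
noncomputable def enorm2 (v : Fin n → ℝ) : ℝ :=
  Real.sqrt (∑ i, v i ^ 2)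

/-- repr of the image under a symmetric matrix with given eigenvector basis. -/
lemma repr_toEuclideanLin (b : OrthonormalBasis (Fin n) ℝ (EuclideanSpace ℝ (Fin n)))
    {P : Matrix (Fin n) (Fin n) ℝ} (hP : P.IsHermitian) (t : Fin n → ℝ)
    (ht : ∀ i, P *ᵥ ⇑(b i) = t i • ⇑(b i)) (v : EuclideanSpace ℝ (Fin n)) (i : Fin n) :
    b.repr (Matrix.toEuclideanLin P v) i = t i * b.repr v i := by
  have hsym := (Matrix.isHermitian_iff_isSymmetric).mp hP
  have h1 : Matrix.toEuclideanLin P (b i) = t i • b i := by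
    apply (WithLp.equiv 2 (Fin n → ℝ)).injective
    simpa [Matrix.toEuclideanLin_apply] using ht i
  rw [OrthonormalBasis.repr_apply_apply, OrthonormalBasis.repr_apply_apply,
    ← hsym (b i) v, h1, real_inner_smul_left]

lemma norm_sq_eq_sum_repr (b : OrthonormalBasis (Fin n) ℝ (EuclideanSpace ℝ (Fin n)))
    (x : EuclideanSpace ℝ (Fin n)) : ‖x‖ ^ 2 = ∑ i, (b.repr x i) ^ 2 := by
  rw [← b.repr.norm_map x, EuclideanSpace.norm_eq, Real.sq_sqrt (by positivity)]
  simp [sq_abs]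

lemma norm_toEuclideanLin_diagonal_le (d : Fin n → ℝ) (ρ : ℝ) (hρ : 0 ≤ ρ) (hd : ∀ i, |d i| ≤ ρ)
    (w : EuclideanSpace ℝ (Fin n)) :
    ‖Matrix.toEuclideanLin (Matrix.diagonal d) w‖ ≤ ρ * ‖w‖ := by
  have h1 : ‖Matrix.toEuclideanLin (Matrix.diagonal d) w‖ ^ 2 ≤ (ρ * ‖w‖) ^ 2 := by
    rw [EuclideanSpace.norm_eq, Real.sq_sqrt (by positivity), mul_pow,
      EuclideanSpace.norm_eq, Real.sq_sqrt (by positivity), Finset.mul_sum]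
    apply Finset.sum_le_sum
    intro i _
    have h2 : (Matrix.toEuclideanLin (Matrix.diagonal d) w) i = d i * w i := by
      simp [Matrix.toEuclideanLin_apply, Matrix.mulVec_diagonal]
    rw [h2, Real.norm_eq_abs, Real.norm_eq_abs, abs_mul, mul_pow]
    exact mul_le_mul_of_nonneg_right (pow_le_pow_left₀ (abs_nonneg _) (hd i) 2) (by positivity)
  nlinarith [norm_nonneg (Matrix.toEuclideanLin (Matrix.diagonal d) w),
    mul_nonneg hρ (norm_nonneg w)]

lemma toEuclideanLin_mul' (A B : Matrix (Fin n) (Fin n) ℝ) (v : EuclideanSpace ℝ (Fin n)) :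
    Matrix.toEuclideanLin (A * B) v = Matrix.toEuclideanLin A (Matrix.toEuclideanLin B v) := by
  apply (WithLp.equiv 2 (Fin n → ℝ)).injective
  simp [Matrix.toEuclideanLin_apply, Matrix.mulVec_mulVec]

set_option maxHeartbeats 1000000 in
theorem stmt0 [NeZero n] (Q Γ : Matrix (Fin n) (Fin n) ℝ) (hQ : Q.PosDef)
    (γ : Fin n → ℝ) (hΓ : Γ = Matrix.diagonal γ)
    (kQ : ℝ) (hkQ : kQ = maxEig hQ.1 / minEig hQ.1)
    (hγ : ∀ i, γ i ∈ Set.Ioo ((Real.sqrt kQ - 1) / (spec Q * Real.sqrt kQ))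
                             ((Real.sqrt kQ + 1) / (spec Q * Real.sqrt kQ))) :
    spec (1 - Γ * Q) < 1 := by
  classical
  haveI : Nonempty (Fin n) := Fin.pos_iff_nonempty.mp (Nat.pos_of_ne_zero (NeZero.ne n))
  have hH := hQ.1
  set b : OrthonormalBasis (Fin n) ℝ (EuclideanSpace ℝ (Fin n)) := hH.eigenvectorBasis with hbdef
  set μ : Fin n → ℝ := hH.eigenvalues with hμdef
  have hbv : ∀ i, Q *ᵥ ⇑(b i) = μ i • ⇑(b i) := fun i => hH.mulVec_eigenvectorBasis i
  have hμpos : ∀ i, 0 < μ i := fun i => hQ.eigenvalues_pos i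
  obtain ⟨iM, hiM⟩ := Finite.exists_max μ
  obtain ⟨im, him⟩ := Finite.exists_min μ
  set lam1 := μ iM with hlam1def
  set lamn := μ im with hlamndef
  have hmax : maxEig hQ.1 = lam1 :=
    le_antisymm (ciSup_le hiM) (le_ciSup (Finite.bddAbove_range μ) iM)
  have hmin : minEig hQ.1 = lamn :=
    le_antisymm (ciInf_le (Finite.bddBelow_range μ) im) (le_ciInf him)
  have hlam1 : 0 < lam1 := hμpos iM
  have hlamn : 0 < lamn := hμpos im
  have hk : kQ = lam1 / lamn := by rw [hkQ, hmax, hmin]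
  have hk1 : 1 ≤ kQ := by rw [hk]; exact (one_le_div hlamn).mpr (him iM)
  have hkpos : 0 < kQ := lt_of_lt_of_le one_pos hk1
  have hsk : 1 ≤ Real.sqrt kQ := by
    rw [show (1:ℝ) = Real.sqrt 1 by simp]; exact Real.sqrt_le_sqrt hk1
  have hskpos : 0 < Real.sqrt kQ := lt_of_lt_of_le one_pos hsk
  -- ‖Q v‖² in eigencoordinates
  have hQv : ∀ v : EuclideanSpace ℝ (Fin n),
      ‖Matrix.toEuclideanLin Q v‖ ^ 2 = ∑ i, (μ i * b.repr v i) ^ 2 := by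
    intro v
    rw [norm_sq_eq_sum_repr b]
    exact Finset.sum_congr rfl fun i _ => by rw [repr_toEuclideanLin b hH μ hbv v i]
  have hQnorm : ∀ v : EuclideanSpace ℝ (Fin n),
      ‖Matrix.toEuclideanLin Q v‖ ≤ lam1 * ‖v‖ := by
    intro v
    have h1 : ‖Matrix.toEuclideanLin Q v‖ ^ 2 ≤ (lam1 * ‖v‖) ^ 2 := by
      rw [hQv v, mul_pow, norm_sq_eq_sum_repr b v, Finset.mul_sum]
      apply Finset.sum_le_sum
      intro i _
      rw [mul_pow]
      exact mul_le_mul_of_nonneg_right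
        (pow_le_pow_left₀ (hμpos i).le (hiM i) 2) (sq_nonneg _)
    nlinarith [norm_nonneg (Matrix.toEuclideanLin Q v), mul_nonneg hlam1.le (norm_nonneg v)]
  -- spec Q = lam1
  have hspec : spec Q = lam1 := by
    apply le_antisymm
    · exact ContinuousLinearMap.opNorm_le_bound _ hlam1.le fun v => hQnorm v
    · have h2 := ContinuousLinearMap.le_opNorm
        (LinearMap.toContinuousLinearMap (Matrix.toEuclideanLin Q)) (b iM)
      have h3 : Matrix.toEuclideanLin Q (b iM) = lam1 • (b iM) := by
        apply (WithLp.equiv 2 (Fin n → ℝ)).injective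
        simpa [Matrix.toEuclideanLin_apply] using hbv iM
      have h4 : ‖b iM‖ = 1 := b.orthonormal.1 iM
      have h5 : (LinearMap.toContinuousLinearMap (Matrix.toEuclideanLin Q)) (b iM)
          = Matrix.toEuclideanLin Q (b iM) := rfl
      rw [h5, h3, norm_smul, h4, Real.norm_eq_abs, abs_of_pos hlam1] at h2
      simpa [spec] using h2
  -- translate the γ bounds
  have hγ' : ∀ i, |γ i - 1 / lam1| < 1 / (lam1 * Real.sqrt kQ) := by
    intro i
    obtain ⟨h1, h2⟩ := hγ i
    rw [hspec] at h1 h2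
    have e1 : (Real.sqrt kQ - 1) / (lam1 * Real.sqrt kQ)
        = 1 / lam1 - 1 / (lam1 * Real.sqrt kQ) := by
      field_simp
    have e2 : (Real.sqrt kQ + 1) / (lam1 * Real.sqrt kQ)
        = 1 / lam1 + 1 / (lam1 * Real.sqrt kQ) := by
      field_simp
    rw [abs_sub_lt_iff]
    constructor <;> [linarith [e2 ▸ h2]; linarith [e1 ▸ h1]]
  set c : ℝ := 1 / lam1 with hcdef
  set r : ℝ := 1 / (lam1 * Real.sqrt kQ) with hrdef
  set d : Fin n → ℝ := fun i => γ i - c with hddef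
  obtain ⟨i0, hi0⟩ := Finite.exists_max (fun i => |d i|)
  set ρ := |d i0| with hρdef
  have hρ0 : 0 ≤ ρ := abs_nonneg _
  have hρr : ρ < r := hγ' i0
  have hrl : r * lam1 = 1 / Real.sqrt kQ := by
    rw [hrdef]; field_simp
  -- matrix identity
  have hγdecomp : Matrix.diagonal γ = c • (1 : Matrix (Fin n) (Fin n) ℝ) + Matrix.diagonal d := by
    ext i j
    by_cases h : i = j
    · subst h; simp [Matrix.diagonal_apply_eq, Matrix.one_apply_eq, hddef]
    · simp [Matrix.diagonal_apply_ne _ h, Matrix.one_apply_ne h]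
  have hmat : (1 : Matrix (Fin n) (Fin n) ℝ) - Γ * Q
      = (1 - c • Q) - Matrix.diagonal d * Q := by
    rw [hΓ, hγdecomp, add_mul, Matrix.smul_mul, Matrix.one_mul, sub_add_eq_sub_sub]
  set P1 : Matrix (Fin n) (Fin n) ℝ := 1 - c • Q with hP1def
  have hP1 : P1.IsHermitian := by
    show P1ᴴ = P1
    have hQt : Qᵀ = Q := by
      have := hQ.1.eq
      simpa using this
    rw [hP1def]
    simp [Matrix.conjTranspose_sub, Matrix.conjTranspose_smul, hQt]
  have hP1v : ∀ i, P1 *ᵥ ⇑(b i) = (1 - c * μ i) • ⇑(b i) := by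
    intro i
    rw [hP1def, Matrix.sub_mulVec, Matrix.one_mulVec, Matrix.smul_mulVec, hbv i,
      smul_smul, sub_smul, one_smul]
  have hP1norm : ∀ v : EuclideanSpace ℝ (Fin n),
      ‖Matrix.toEuclideanLin P1 v‖ ^ 2 = ∑ i, ((1 - c * μ i) * b.repr v i) ^ 2 := by
    intro v
    rw [norm_sq_eq_sum_repr b]
    exact Finset.sum_congr rfl fun i _ =>
      by rw [repr_toEuclideanLin b hP1 (fun i => 1 - c * μ i) hP1v v i]
  -- pointwise triangle bound
  have hTv : ∀ v : EuclideanSpace ℝ (Fin n),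
      ‖Matrix.toEuclideanLin (1 - Γ * Q) v‖
        ≤ ‖Matrix.toEuclideanLin P1 v‖ + ρ * ‖Matrix.toEuclideanLin Q v‖ := by
    intro v
    have hdecomp : Matrix.toEuclideanLin (1 - Γ * Q) v
        = Matrix.toEuclideanLin P1 v
          - Matrix.toEuclideanLin (Matrix.diagonal d) (Matrix.toEuclideanLin Q v) := by
      rw [hmat, map_sub, LinearMap.sub_apply, toEuclideanLin_mul']
    rw [hdecomp]
    refine le_trans (norm_sub_le _ _) ?_
    exact add_le_add le_rfl
      (norm_toEuclideanLin_diagonal_le d ρ hρ0 (fun i => hi0 i) _)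
  -- produce the contraction constant
  obtain ⟨C, hC0, hC1, hCbound⟩ : ∃ C : ℝ, 0 ≤ C ∧ C < 1 ∧
      ∀ v : EuclideanSpace ℝ (Fin n), ‖Matrix.toEuclideanLin (1 - Γ * Q) v‖ ≤ C * ‖v‖ := by
    rcases eq_or_lt_of_le hk1 with hke | hkgt
    · -- kQ = 1 : all eigenvalues equal lam1
      refine ⟨ρ * lam1, mul_nonneg hρ0 hlam1.le, ?_, ?_⟩
      · have h6 : r * lam1 = 1 := by
          rw [hrl, ← hke]; simp
        calc ρ * lam1 < r * lam1 := mul_lt_mul_of_pos_right hρr hlam1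
          _ = 1 := h6
      · intro v
        have hleq : lam1 = lamn := by
          have : lam1 / lamn = 1 := by rw [← hk, ← hke]
          field_simp at this
          linarith
        have hμall : ∀ i, μ i = lam1 := fun i => le_antisymm (hiM i) (hleq ▸ him i)
        have hX : ‖Matrix.toEuclideanLin P1 v‖ ^ 2 = 0 := by
          rw [hP1norm v]
          apply Finset.sum_eq_zero
          intro i _
          rw [hμall i, hcdef]
          field_simp
          simp
        have hX0 : ‖Matrix.toEuclideanLin P1 v‖ = 0 := by
          nlinarith [norm_nonneg (Matrix.toEuclideanLin P1 v)]
        calc ‖Matrix.toEuclideanLin (1 - Γ * Q) v‖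
            ≤ ‖Matrix.toEuclideanLin P1 v‖ + ρ * ‖Matrix.toEuclideanLin Q v‖ := hTv v
          _ = ρ * ‖Matrix.toEuclideanLin Q v‖ := by rw [hX0, zero_add]
          _ ≤ ρ * (lam1 * ‖v‖) := mul_le_mul_of_nonneg_left (hQnorm v) hρ0
          _ = ρ * lam1 * ‖v‖ := by ring
    · -- 1 < kQ
      set s : ℝ := kQ - 1 with hsdef
      have hs0 : 0 < s := by rw [hsdef]; linarith
      set g : Fin n → ℝ := fun i => (1 + 1/s) * (1 - c * μ i) ^ 2 + (1 + s) * ρ ^ 2 * (μ i) ^ 2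
        with hgdef
      obtain ⟨j0, hj0⟩ := Finite.exists_max g
      have h1s : 0 < 1 + 1/s := by positivity
      have hgnn : ∀ j, 0 ≤ g j := by
        intro j
        simp only [hgdef]
        apply add_nonneg
        · exact mul_nonneg h1s.le (sq_nonneg _)
        · have h1s' : (0:ℝ) ≤ 1 + s := by linarith
          exact mul_nonneg (mul_nonneg h1s' (sq_nonneg _)) (sq_nonneg _)
      have hg0 : 0 ≤ g j0 := hgnn j0
      have hβ : kQ * (ρ ^ 2 * lam1 ^ 2) < 1 := by
        have h7 : ρ * lam1 < 1 / Real.sqrt kQ := by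
          rw [← hrl]; exact mul_lt_mul_of_pos_right hρr hlam1
        have h8 : (ρ * lam1) ^ 2 < (1 / Real.sqrt kQ) ^ 2 :=
          pow_lt_pow_left₀ h7 (mul_nonneg hρ0 hlam1.le) (by norm_num)
        rw [div_pow, one_pow, Real.sq_sqrt hkpos.le] at h8
        rw [show ρ ^ 2 * lam1 ^ 2 = (ρ * lam1) ^ 2 by ring]
        calc kQ * (ρ * lam1) ^ 2 < kQ * (1 / kQ) := by
              exact mul_lt_mul_of_pos_left h8 hkpos
          _ = 1 := mul_one_div_cancel hkpos.ne'
      have hglt : ∀ j, g j < 1 := by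
        intro j
        set t : ℝ := c * μ j with htdef
        have ht1 : t ≤ 1 := by
          rw [htdef, hcdef]
          rw [div_mul_eq_mul_div, one_mul, div_le_one hlam1]
          exact hiM j
        have htpos : 0 < t := by
          rw [htdef]
          exact mul_pos (by positivity) (hμpos j)
        have htk : 1 ≤ kQ * t := by
          have h9 : kQ * t = μ j / lamn := by
            rw [htdef, hcdef, hk]; field_simp
          rw [h9]
          exact (one_le_div hlamn).mpr (him j)
        have hμj : μ j = t * lam1 := by
          rw [htdef, hcdef]; field_simp
        have key : kQ * (1 - t) ^ 2 + s * t ^ 2 ≤ s := by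
          have h2kt : 0 ≤ (2 * kQ - 1) * t - 1 := by nlinarith
          have hprod : 0 ≤ ((2 * kQ - 1) * t - 1) * (1 - t) :=
            mul_nonneg h2kt (by linarith)
          rw [hsdef]
          nlinarith
        have hnum : kQ * (1 - t) ^ 2 + s * kQ * (ρ ^ 2 * lam1 ^ 2) * t ^ 2
            < kQ * (1 - t) ^ 2 + s * t ^ 2 := by
          have := mul_pos hs0 (mul_pos htpos htpos)
          nlinarith [mul_pos hs0 (mul_pos htpos htpos)]
        have hgj : g j = (1 + 1/s) * (1 - t) ^ 2 + (1 + s) * ρ ^ 2 * (t * lam1) ^ 2 := by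
          simp only [hgdef]
          rw [← htdef, ← hμj]
        have hval : g j = (kQ * (1 - t) ^ 2 + s * kQ * (ρ ^ 2 * lam1 ^ 2) * t ^ 2) / s := by
          have hkq : kQ = 1 + s := by rw [hsdef]; ring
          rw [hgj, eq_div_iff hs0.ne', hkq]
          field_simp [hs0.ne']
          ring
        rw [hval]
        calc (kQ * (1 - t) ^ 2 + s * kQ * (ρ ^ 2 * lam1 ^ 2) * t ^ 2) / s
            < (kQ * (1 - t) ^ 2 + s * t ^ 2) / s := (div_lt_div_iff_of_pos_right hs0).mpr hnum
          _ ≤ s / s := (div_le_div_iff_of_pos_right hs0).mpr key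
          _ = 1 := div_self hs0.ne'
      refine ⟨Real.sqrt (g j0), Real.sqrt_nonneg _, ?_, ?_⟩
      · rw [show (1:ℝ) = Real.sqrt 1 by simp]
        exact Real.sqrt_lt_sqrt hg0 (hglt j0)
      · intro v
        set X := ‖Matrix.toEuclideanLin P1 v‖ with hXdef
        set Y := ‖Matrix.toEuclideanLin Q v‖ with hYdef
        have hXnn : 0 ≤ X := norm_nonneg _
        have hYnn : 0 ≤ Y := norm_nonneg _
        have hamgm : (X + ρ * Y) ^ 2 ≤ (1 + 1/s) * X ^ 2 + (1 + s) * ρ ^ 2 * Y ^ 2 := by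
          have hid : (1 + 1/s) * X ^ 2 + (1 + s) * ρ ^ 2 * Y ^ 2 - (X + ρ * Y) ^ 2
              = (X - s * (ρ * Y)) ^ 2 / s := by
            field_simp
            ring
          have := div_nonneg (sq_nonneg (X - s * (ρ * Y))) hs0.le
          linarith
        have hsum : (1 + 1/s) * X ^ 2 + (1 + s) * ρ ^ 2 * Y ^ 2 ≤ g j0 * ‖v‖ ^ 2 := by
          have he : (1 + 1/s) * X ^ 2 + (1 + s) * ρ ^ 2 * Y ^ 2
              = ∑ i, (b.repr v i) ^ 2 * g i := by
            rw [hXdef, hYdef, hP1norm v, hQv v, Finset.mul_sum, Finset.mul_sum,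
              ← Finset.sum_add_distrib]
            apply Finset.sum_congr rfl
            intro i _
            simp only [hgdef]
            ring
          rw [he]
          calc ∑ i, (b.repr v i) ^ 2 * g i ≤ ∑ i, (b.repr v i) ^ 2 * g j0 :=
                Finset.sum_le_sum fun i _ => mul_le_mul_of_nonneg_left (hj0 i) (sq_nonneg _)
            _ = g j0 * ‖v‖ ^ 2 := by rw [← Finset.sum_mul, ← norm_sq_eq_sum_repr b v]; ring
        have hfin : ‖Matrix.toEuclideanLin (1 - Γ * Q) v‖ ^ 2 ≤ (Real.sqrt (g j0) * ‖v‖) ^ 2 := by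
          have h10 := hTv v
          have h11 : ‖Matrix.toEuclideanLin (1 - Γ * Q) v‖ ^ 2 ≤ (X + ρ * Y) ^ 2 := by
            apply pow_le_pow_left₀ (norm_nonneg _) h10
          rw [mul_pow, Real.sq_sqrt hg0]
          exact le_trans h11 (le_trans hamgm hsum)
        nlinarith [norm_nonneg (Matrix.toEuclideanLin (1 - Γ * Q) v),
          mul_nonneg (Real.sqrt_nonneg (g j0)) (norm_nonneg v)]
  calc spec (1 - Γ * Q) ≤ C :=
        ContinuousLinearMap.opNorm_le_bound _ hC0 fun v => hCbound v
    _ < 1 := hC1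
end

section
/- Let Q be an n×n real symmetric positive definite matrix with spectral condition number k_Q, and let Γ be a diagonal matrix whose diagonal entries satisfy γ_i ∈ ((√k_Q − 1)/(‖Q‖₂ √k_Q), (√k_Q + 1)/(‖Q‖₂ √k_Q)) for all i. Then the matrix Q⁻¹Γ⁻¹ + Γ⁻¹Q⁻¹ − I is positive definite. -/
open Matrix Filter Topology

variable {n : ℕ}

lemma quad_expand {Q : Matrix (Fin n) (Fin n) ℝ} (hQ : Q.IsHermitian) (y : Fin n → ℝ) :
    ∃ c : Fin n → ℝ,
      y ⬝ᵥ y = ∑ i, c i ^ 2 ∧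
      y ⬝ᵥ Q *ᵥ y = ∑ i, hQ.eigenvalues i * c i ^ 2 ∧
      (Q *ᵥ y) ⬝ᵥ (Q *ᵥ y) = ∑ i, (hQ.eigenvalues i)^2 * c i ^ 2 := by
  classical
  set U : Matrix (Fin n) (Fin n) ℝ := (hQ.eigenvectorUnitary : Matrix (Fin n) (Fin n) ℝ) with hU
  have hU1 : (star U) * U = 1 := Unitary.coe_star_mul_self hQ.eigenvectorUnitary
  have hU2 : U * (star U) = 1 := Unitary.coe_mul_star_self hQ.eigenvectorUnitary
  have hst : star U = Uᵀ := by
    rw [star_eq_conjTranspose, conjTranspose_eq_transpose_of_trivial]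
  have hsp : Q = U * diagonal hQ.eigenvalues * star U := by
    have := hQ.spectral_theorem
    simpa using this
  set c : Fin n → ℝ := (star U) *ᵥ y with hc
  have key : ∀ z w : Fin n → ℝ, (U *ᵥ z) ⬝ᵥ (U *ᵥ w) = z ⬝ᵥ w := by
    intro z w
    rw [dotProduct_mulVec, ← mulVec_transpose, mulVec_mulVec, ← hst, hU1, one_mulVec]
  have hy : y = U *ᵥ c := by
    rw [hc, mulVec_mulVec, hU2, one_mulVec]
  have hQy : Q *ᵥ y = U *ᵥ (fun i => hQ.eigenvalues i * c i) := by
    conv_lhs => rw [hsp]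
    have : (diagonal hQ.eigenvalues) *ᵥ c = fun i => hQ.eigenvalues i * c i := by
      ext i; rw [mulVec_diagonal]
    rw [← mulVec_mulVec, ← mulVec_mulVec, ← hc, this]
  refine ⟨c, ?_, ?_, ?_⟩
  · have : y ⬝ᵥ y = (U *ᵥ c) ⬝ᵥ (U *ᵥ c) := by rw [← hy]
    rw [this, key]
    simp [dotProduct, sq]
  · have : y ⬝ᵥ Q *ᵥ y = (U *ᵥ c) ⬝ᵥ (U *ᵥ fun i => hQ.eigenvalues i * c i) := by
      rw [← hy, ← hQy]
    rw [this, key]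
    simp only [dotProduct]
    exact Finset.sum_congr rfl fun i _ => by ring
  · have : (Q *ᵥ y) ⬝ᵥ (Q *ᵥ y) = (U *ᵥ fun i => hQ.eigenvalues i * c i) ⬝ᵥ (U *ᵥ fun i => hQ.eigenvalues i * c i) := by
      rw [← hQy]
    rw [this, key]
    simp only [dotProduct]
    exact Finset.sum_congr rfl fun i _ => by ring

lemma spec_eq [NeZero n] {Q : Matrix (Fin n) (Fin n) ℝ} (hQ : Q.PosDef) :
    spec Q = maxEig hQ.1 := by
  have hne : Nonempty (Fin n) := Fin.pos_iff_nonempty.mp (Nat.pos_of_ne_zero (NeZero.ne n))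
  set L := maxEig hQ.1 with hL
  have hbdd : BddAbove (Set.range hQ.1.eigenvalues) := Set.Finite.bddAbove (Set.finite_range _)
  have hle : ∀ i, hQ.1.eigenvalues i ≤ L := fun i => le_ciSup hbdd i
  have hpos : ∀ i, 0 < hQ.1.eigenvalues i := hQ.eigenvalues_pos
  obtain ⟨j, hj⟩ : ∃ j, hQ.1.eigenvalues j = L := exists_eq_ciSup_of_finite
  have hL0 : 0 < L := hj ▸ hpos j
  apply le_antisymm
  · apply ContinuousLinearMap.opNorm_le_bound _ hL0.le
    intro v
    simp only [LinearMap.coe_toContinuousLinearMap', toEuclideanLin_apply]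
    set y : Fin n → ℝ := (WithLp.equiv 2 (Fin n → ℝ)) v with hy
    obtain ⟨c, h1, h2, h3⟩ := quad_expand hQ.1 y
    have hnv : ‖v‖^2 = y ⬝ᵥ y := by
      rw [EuclideanSpace.norm_eq, Real.sq_sqrt (by positivity)]
      simp only [Real.norm_eq_abs, sq_abs, dotProduct, pow_two]
      exact Finset.sum_congr rfl fun i _ => abs_mul_abs_self _
    have hnQ : ‖(WithLp.equiv 2 (Fin n → ℝ)).symm (Q *ᵥ y)‖^2 = (Q *ᵥ y) ⬝ᵥ (Q *ᵥ y) := by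
      rw [EuclideanSpace.norm_eq, Real.sq_sqrt (by positivity)]
      simp only [Real.norm_eq_abs, sq_abs, dotProduct, pow_two]
      exact Finset.sum_congr rfl fun i _ => abs_mul_abs_self _
    have hb : (Q *ᵥ y) ⬝ᵥ (Q *ᵥ y) ≤ L^2 * (y ⬝ᵥ y) := by
      rw [h1, h3, Finset.mul_sum]
      apply Finset.sum_le_sum
      intro i _
      have h1i := hle i; have h2i := hpos i
      have : hQ.1.eigenvalues i ^ 2 ≤ L^2 := by nlinarith
      exact mul_le_mul_of_nonneg_right this (sq_nonneg _)
    have h2' : ‖(WithLp.equiv 2 (Fin n → ℝ)).symm (Q *ᵥ y)‖^2 ≤ (L * ‖v‖)^2 := by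
      rw [hnQ, mul_pow, hnv]; exact hb
    exact le_of_pow_le_pow_left₀ two_ne_zero (by positivity) h2'
  · have hTv : ∀ w : EuclideanSpace ℝ (Fin n),
        ‖(LinearMap.toContinuousLinearMap (Matrix.toEuclideanLin Q)) w‖ ≤ spec Q * ‖w‖ :=
      fun w => (LinearMap.toContinuousLinearMap (Matrix.toEuclideanLin Q)).le_opNorm w
    set w : EuclideanSpace ℝ (Fin n) := hQ.1.eigenvectorBasis j with hw
    have hnw : ‖w‖ = 1 := hQ.1.eigenvectorBasis.orthonormal.1 j
    have happ : (LinearMap.toContinuousLinearMap (Matrix.toEuclideanLin Q)) w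
        = (WithLp.equiv 2 (Fin n → ℝ)).symm (Q *ᵥ (WithLp.equiv 2 (Fin n → ℝ)) w) := rfl
    have hQw : Q *ᵥ (WithLp.equiv 2 (Fin n → ℝ)) w = L • (WithLp.equiv 2 (Fin n → ℝ)) w := by
      have := hQ.1.mulVec_eigenvectorBasis j
      rw [hj] at this
      exact this
    have := hTv w
    rw [happ, hQw, hnw, mul_one] at this
    calc L = ‖(WithLp.equiv 2 (Fin n → ℝ)).symm (L • (WithLp.equiv 2 (Fin n → ℝ)) w)‖ := by
            rw [show (WithLp.equiv 2 (Fin n → ℝ)).symm (L • (WithLp.equiv 2 (Fin n → ℝ)) w) = L • w from rfl, norm_smul, hnw,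
              Real.norm_eq_abs, abs_of_pos hL0, mul_one]
      _ ≤ spec Q := this


lemma perterm (L e gam t : ℝ) (h1 : 1-e ≤ gam*L) (h2 : gam*L ≤ 1+e) (h3 : 0 < gam)
    (he0 : 0 ≤ e) (he1 : e < 1) :
    2*L*t - 2*L*e*|t| ≤ (1-e^2) * (2 * (gam⁻¹ * t)) := by
  rw [← mul_le_mul_iff_right₀ h3]
  have hR : gam * ((1-e^2) * (2 * (gam⁻¹ * t))) = (1-e^2) * (2 * t) := by
    field_simp
  rw [hR]
  rcases abs_cases t with ⟨ha, ht⟩ | ⟨ha, ht⟩ <;> rw [ha]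
  · nlinarith [mul_nonneg (mul_nonneg ht (sub_nonneg.2 he1.le)) (sub_nonneg.2 h2)]
  · nlinarith [mul_nonneg (mul_nonneg (neg_nonneg.2 ht.le) (by linarith : (0:ℝ) ≤ 1+e))
      (sub_nonneg.2 h1)]

lemma core_num (L m e A N2 C2 S : ℝ) (hm0 : 0 < m) (hmL : m ≤ L) (he0 : 0 ≤ e)
    (hm_e : e^2*L < m) (hN2pos : 0 < N2) (hC2nn : 0 ≤ C2) (hS0 : 0 ≤ S)
    (hF1 : N2 ≤ L*A) (hF2 : L*m*C2 + N2 ≤ (L+m)*A) (hCS : S^2 ≤ N2*C2) :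
    (1-e^2)*N2 < 2*L*A - 2*L*e*S := by
  have hL0 : 0 < L := lt_of_lt_of_le hm0 hmL
  have h3a : 0 < 2*L*A - (1-e^2)*N2 := by nlinarith [sq_nonneg e, mul_pos hN2pos hm0]
  have hstep3 : 4*L*e^2*N2*((L+m)*A - N2) < m * ((2*L*A - (1-e^2)*N2)^2) := by
    have hZ : 0 < N2 * (m - e^2*L) := mul_pos hN2pos (by linarith)
    have h7 : N2 * (m - e^2*L) ≤ 2*m*L*A - m*N2 - e^2*L*N2 := by nlinarith [hF1, hm0]
    have h2m : 0 ≤ 2*m - e^2*(L+m) := by nlinarith [hm_e, hm0, hmL, sq_nonneg e]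
    have hY : 0 ≤ e^2 * N2^2 * ((L - m) * (2*m - e^2*(L+m))) :=
      mul_nonneg (mul_nonneg (sq_nonneg e) (sq_nonneg N2))
        (mul_nonneg (by linarith) h2m)
    have hXZ := mul_self_le_mul_self hZ.le h7
    have hm2 : m * (4*L*e^2*N2*((L+m)*A - N2)) < m * (m * ((2*L*A - (1-e^2)*N2)^2)) := by
      nlinarith [hXZ, hY, mul_pos hZ hZ]
    exact lt_of_mul_lt_mul_left hm2 hm0.le
  have hchain : m * ((2*L*e*S)^2) < m * ((2*L*A - (1-e^2)*N2)^2) := by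
    calc m * ((2*L*e*S)^2) = m * (4*L^2*e^2*(S^2)) := by ring
      _ ≤ m * (4*L^2*e^2*(N2*C2)) := by
          apply mul_le_mul_of_nonneg_left _ hm0.le
          exact mul_le_mul_of_nonneg_left hCS (by positivity)
      _ = 4*L*e^2*N2*(L*m*C2) := by ring
      _ ≤ 4*L*e^2*N2*((L+m)*A - N2) := by
          apply mul_le_mul_of_nonneg_left (by linarith [hF2]) (by positivity)
      _ < m * ((2*L*A - (1-e^2)*N2)^2) := hstep3
  have hsq : (2*L*e*S)^2 < (2*L*A - (1-e^2)*N2)^2 := lt_of_mul_lt_mul_left hchain hm0.le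
  have h0 : 0 ≤ 2*L*e*S := by positivity
  nlinarith [hsq, h0, h3a]

lemma termF1 (lam L c : ℝ) (h0 : 0 < lam) (hle : lam ≤ L) :
    lam^2 * c^2 ≤ L * (lam * c^2) := by nlinarith [mul_nonneg (mul_nonneg (sub_nonneg.2 hle) h0.le) (sq_nonneg c)]

lemma termF2 (lam L m c : ℝ) (h1 : m ≤ lam) (h2 : lam ≤ L) :
    L*m*c^2 + lam^2*c^2 ≤ (L+m)*(lam*c^2) := by
  nlinarith [mul_nonneg (mul_nonneg (sub_nonneg.2 h1) (sub_nonneg.2 h2)) (sq_nonneg c)]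

theorem stmt2 [NeZero n] (Q Γ : Matrix (Fin n) (Fin n) ℝ) (hQ : Q.PosDef)
    (γ : Fin n → ℝ) (hΓ : Γ = Matrix.diagonal γ)
    (kQ : ℝ) (hkQ : kQ = maxEig hQ.1 / minEig hQ.1)
    (hγ : ∀ i, γ i ∈ Set.Ioo ((Real.sqrt kQ - 1) / (spec Q * Real.sqrt kQ))
                             ((Real.sqrt kQ + 1) / (spec Q * Real.sqrt kQ))) :
    (Q⁻¹ * Γ⁻¹ + Γ⁻¹ * Q⁻¹ - 1).PosDef := by
  classical
  have hne : Nonempty (Fin n) := Fin.pos_iff_nonempty.mp (Nat.pos_of_ne_zero (NeZero.ne n))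
  set L := maxEig hQ.1 with hLdef
  set m := minEig hQ.1 with hmdef
  have hbddA : BddAbove (Set.range hQ.1.eigenvalues) := Set.Finite.bddAbove (Set.finite_range _)
  have hbddB : BddBelow (Set.range hQ.1.eigenvalues) := Set.Finite.bddBelow (Set.finite_range _)
  have hle : ∀ i, hQ.1.eigenvalues i ≤ L := fun i => le_ciSup hbddA i
  have hge : ∀ i, m ≤ hQ.1.eigenvalues i := fun i => ciInf_le hbddB i
  have hpos : ∀ i, 0 < hQ.1.eigenvalues i := hQ.eigenvalues_pos
  have hm0 : 0 < m := by
    obtain ⟨j, hj⟩ : ∃ j, hQ.1.eigenvalues j = m := exists_eq_ciInf_of_finite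
    exact hj ▸ hpos j
  have hmL : m ≤ L := le_trans (hge (Classical.arbitrary _)) (hle _)
  have hL0 : 0 < L := lt_of_lt_of_le hm0 hmL
  have hspec : spec Q = L := spec_eq hQ
  have hk1 : 1 ≤ kQ := by rw [hkQ]; exact (one_le_div hm0).2 hmL
  set s := Real.sqrt kQ with hs
  have hs1 : 1 ≤ s := by
    rw [hs, show (1:ℝ) = Real.sqrt 1 by simp]
    exact Real.sqrt_le_sqrt hk1
  have hs0 : 0 < s := lt_of_lt_of_le one_pos hs1
  have hssq : s^2 = kQ := Real.sq_sqrt (le_trans zero_le_one hk1)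
  have hLs : 0 < L * s := mul_pos hL0 hs0
  -- the per-coordinate deviation
  have hγ' : ∀ i, |γ i - 1/L| < 1/(L*s) := by
    intro i
    obtain ⟨hlo, hhi⟩ := hγ i
    rw [hspec] at hlo hhi
    have e1 : (s - 1) / (L * s) = 1/L - 1/(L*s) := by
      field_simp
    have e2 : (s + 1) / (L * s) = 1/L + 1/(L*s) := by
      field_simp
    rw [e1] at hlo; rw [e2] at hhi
    rw [abs_lt]; constructor <;> linarith
  set ε : ℝ := Finset.univ.sup' Finset.univ_nonempty (fun i => |γ i - 1/L|) with hεdef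
  have hεle : ∀ i, |γ i - 1/L| ≤ ε := fun i => Finset.le_sup' (fun i => |γ i - 1/L|) (Finset.mem_univ i)
  have hεlt : ε < 1/(L*s) := by
    obtain ⟨i₀, _, h⟩ := Finset.exists_mem_eq_sup' Finset.univ_nonempty (fun i => |γ i - 1/L|)
    rw [hεdef, h]
    exact hγ' i₀
  have hε0 : 0 ≤ ε := le_trans (abs_nonneg _) (hεle (Classical.arbitrary _))
  set e := L * ε with hedef
  have he0 : 0 ≤ e := mul_nonneg hL0.le hε0
  have hes : e * s < 1 := by
    have := (mul_lt_mul_iff_left₀ hLs).2 hεlt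
    calc e * s = ε * (L * s) := by rw [hedef]; ring
      _ < (1/(L*s)) * (L*s) := (mul_lt_mul_iff_left₀ hLs).2 hεlt
      _ = 1 := by field_simp
  have he1 : e < 1 := by
    calc e = e * 1 := (mul_one e).symm
      _ ≤ e * s := by exact mul_le_mul_of_nonneg_left hs1 he0
      _ < 1 := hes
  have he2 : e^2 * kQ < 1 := by
    rw [← hssq]
    calc e^2 * s^2 = (e*s)^2 := by ring
      _ < 1 := by nlinarith [mul_nonneg he0 hs0.le]
  have hm_e : e^2 * L < m := by
    rw [hkQ, hLdef, hmdef] at he2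
    rw [div_eq_mul_inv] at he2
    have : e^2 * (L * m⁻¹) * m < 1 * m := (mul_lt_mul_iff_left₀ hm0).2 he2
    calc e^2 * L = e^2 * (L * m⁻¹) * m := by field_simp
      _ < 1 * m := this
      _ = m := one_mul m
  -- gamma bounds
  have hγb : ∀ i, 1 - e ≤ γ i * L ∧ γ i * L ≤ 1 + e ∧ 0 < γ i := by
    intro i
    have h := abs_le.1 (hεle i)
    have hγL1 : 1 - e ≤ γ i * L := by
      have : 1/L - ε ≤ γ i := by linarith [h.1]
      calc 1 - e = (1/L - ε) * L := by
            rw [sub_mul, one_div, inv_mul_cancel₀ hL0.ne', hedef]; ring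
        _ ≤ γ i * L := (mul_le_mul_iff_left₀ hL0).2 this
    have hγL2 : γ i * L ≤ 1 + e := by
      have : γ i ≤ 1/L + ε := by linarith [h.2]
      calc γ i * L ≤ (1/L + ε) * L := (mul_le_mul_iff_left₀ hL0).2 this
        _ = 1 + e := by rw [add_mul, one_div, inv_mul_cancel₀ hL0.ne', hedef]; ring
    refine ⟨hγL1, hγL2, ?_⟩
    have hgl : 0 < γ i * L := by nlinarith
    rcases lt_or_ge 0 (γ i) with h' | h'
    · exact h'
    · exfalso; nlinarith
  have hγ0 : ∀ i, γ i ≠ 0 := fun i => (hγb i).2.2.ne'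
  -- the inverse of Γ
  have hGinv : Γ⁻¹ = diagonal (fun i => (γ i)⁻¹) := by
    rw [hΓ]
    apply inv_eq_right_inv
    rw [diagonal_mul_diagonal]
    have : (fun i => γ i * (γ i)⁻¹) = fun _ => (1:ℝ) := by
      funext i; exact mul_inv_cancel₀ (hγ0 i)
    rw [this, diagonal_one]
  rw [hGinv]
  set g : Fin n → ℝ := fun i => (γ i)⁻¹ with hgdef
  set D := diagonal g with hDdef
  -- invertibility of Q
  have hdet : IsUnit Q.det := isUnit_iff_ne_zero.2 hQ.det_pos.ne'
  have hP : (Q⁻¹).PosDef := hQ.inv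
  have hPt : Q⁻¹ᵀ = Q⁻¹ := by
    have := hP.1
    rwa [Matrix.IsHermitian, conjTranspose_eq_transpose_of_trivial] at this
  rw [posDef_iff_dotProduct_mulVec]
  constructor
  · -- Hermitian
    have hDh : Dᴴ = D := (isHermitian_diagonal g)
    have hPh : Q⁻¹ᴴ = Q⁻¹ := hP.1
    show (Q⁻¹ * D + D * Q⁻¹ - 1)ᴴ = _
    rw [conjTranspose_sub, conjTranspose_add, conjTranspose_mul, conjTranspose_mul,
      hDh, hPh, conjTranspose_one, add_comm]
  intro x hx
  have hxs : star x = x := by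
    funext i; exact star_trivial _
  rw [hxs]
  set u := Q⁻¹ *ᵥ x with hu
  have hxu : Q *ᵥ u = x := by
    rw [hu, mulVec_mulVec, Matrix.mul_nonsing_inv Q hdet, one_mulVec]
  have hu0 : u ≠ 0 := fun h => hx (by rw [← hxu, h, mulVec_zero])
  -- quadratic form expansion
  have hvm : x ᵥ* Q⁻¹ = u := by
    rw [← hPt, vecMul_transpose, ← hu]
  have hterm1 : x ⬝ᵥ (Q⁻¹ * D) *ᵥ x = ∑ i, u i * (g i * x i) := by
    rw [← mulVec_mulVec, dotProduct_mulVec, hvm]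
    simp only [dotProduct]
    exact Finset.sum_congr rfl fun i _ => by rw [mulVec_diagonal]
  have hterm2 : x ⬝ᵥ (D * Q⁻¹) *ᵥ x = ∑ i, x i * (g i * u i) := by
    rw [← mulVec_mulVec, ← hu]
    simp only [dotProduct]
    exact Finset.sum_congr rfl fun i _ => by rw [mulVec_diagonal]
  have hform : x ⬝ᵥ ((Q⁻¹ * D + D * Q⁻¹ - 1) *ᵥ x)
      = (∑ i, 2 * (g i * (x i * u i))) - x ⬝ᵥ x := by
    rw [sub_mulVec, add_mulVec, dotProduct_sub, dotProduct_add, one_mulVec,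
      hterm1, hterm2, ← Finset.sum_add_distrib]
    congr 1
    exact Finset.sum_congr rfl fun i _ => by ring
  rw [hform]
  -- scalar quantities
  set A := x ⬝ᵥ u with hA
  set N2 := x ⬝ᵥ x with hN2d
  set C2 := u ⬝ᵥ u with hC2d
  set S := ∑ i, |x i * u i| with hSd
  have hA_eq : A = u ⬝ᵥ Q *ᵥ u := by rw [hA, ← hxu, dotProduct_comm]
  have hA_pos : 0 < A := by
    have := hQ.dotProduct_mulVec_pos hu0
    rw [show star u = u from funext fun i => star_trivial _] at this
    rw [hA_eq]; exact this
  have hN2_eq : N2 = (Q *ᵥ u) ⬝ᵥ (Q *ᵥ u) := by rw [hN2d, ← hxu]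
  have hN2pos : 0 < N2 := by
    obtain ⟨j, hj⟩ : ∃ j, x j ≠ 0 := by
      by_contra hc; push_neg at hc; exact hx (funext hc)
    rw [hN2d]
    simp only [dotProduct]
    exact Finset.sum_pos' (fun i _ => mul_self_nonneg _) ⟨j, Finset.mem_univ j, mul_self_pos.2 hj⟩
  obtain ⟨c, hc1, hc2, hc3⟩ := quad_expand hQ.1 u
  have hF1 : N2 ≤ L * A := by
    rw [hN2_eq, hc3, hA_eq, hc2, Finset.mul_sum]
    exact Finset.sum_le_sum fun i _ => termF1 _ _ _ (hpos i) (hle i)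
  have hF2 : L * m * C2 + N2 ≤ (L + m) * A := by
    rw [hN2_eq, hc3, hA_eq, hc2, hC2d, hc1, Finset.mul_sum, Finset.mul_sum,
      ← Finset.sum_add_distrib]
    exact Finset.sum_le_sum fun i _ => termF2 _ _ _ _ (hge i) (hle i)
  have hC2nn : 0 ≤ C2 := by
    rw [hC2d, hc1]; exact Finset.sum_nonneg fun i _ => sq_nonneg _
  have hS0 : 0 ≤ S := Finset.sum_nonneg fun i _ => abs_nonneg _
  have hCS : S^2 ≤ N2 * C2 := by
    have h := Finset.sum_mul_sq_le_sq_mul_sq Finset.univ (fun i => |x i|) (fun i => |u i|)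
    rw [hSd, hN2d, hC2d]
    simp only [dotProduct]
    calc (∑ i, |x i * u i|)^2 = (∑ i, |x i| * |u i|)^2 := by
          congr 1; exact Finset.sum_congr rfl fun i _ => abs_mul _ _
      _ ≤ (∑ i, |x i|^2) * (∑ i, |u i|^2) := h
      _ = (∑ i, x i * x i) * (∑ i, u i * u i) := by
          congr 1 <;> exact Finset.sum_congr rfl fun i _ => by
            rw [sq_abs, pow_two]
  -- per-term lower bound
  have hkey_i : ∀ i, 2*L*(x i * u i) - 2*L*e*|x i * u i| ≤ (1-e^2) * (2 * (g i * (x i * u i))) := by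
    intro i
    obtain ⟨h1, h2, h3⟩ := hγb i
    exact perterm L e (γ i) (x i * u i) h1 h2 h3 he0 he1
  have hsum : 2*L*A - 2*L*e*S ≤ (1-e^2) * (∑ i, 2 * (g i * (x i * u i))) := by
    have h := Finset.sum_le_sum (fun i (_ : i ∈ Finset.univ) => hkey_i i)
    have e1 : ∑ i, (2*L*(x i * u i) - 2*L*e*|x i * u i|) = 2*L*A - 2*L*e*S := by
      rw [Finset.sum_sub_distrib, ← Finset.mul_sum, ← Finset.mul_sum, hSd, hA]
      rfl
    have e2 : ∑ i, (1-e^2) * (2 * (g i * (x i * u i)))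
        = (1-e^2) * ∑ i, 2 * (g i * (x i * u i)) := by
      rw [Finset.mul_sum]
    rw [← e1, ← e2]
    exact h
  -- the core numeric inequality
  have h1me2 : 0 < 1 - e^2 := by
    rw [sub_pos]
    exact pow_lt_one₀ he0 he1 two_ne_zero
  have hcore : (1-e^2)*N2 < 2*L*A - 2*L*e*S :=
    core_num L m e A N2 C2 S hm0 hmL he0 hm_e hN2pos hC2nn hS0 hF1 hF2 hCS
  have hfin : (1-e^2) * N2 < (1-e^2) * (∑ i, 2 * (g i * (x i * u i))) :=
    lt_of_lt_of_le hcore hsum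
  have := (mul_lt_mul_iff_right₀ h1me2).1 hfin
  linarith
end

section
/- Let B and C be positive definite n×n Hermitian matrices with eigenvalues λ₁(B) ≥ … ≥ λ_n(B) and λ₁(C) ≥ … ≥ λ_n(C), and spectral condition numbers k_B = λ₁(B)/λ_n(B) and k_C = λ₁(C)/λ_n(C). Then λ_n(BC + CB) ≥ min over β ∈ {1, n} of [ (λ_β(B) λ_β(C) / 2) · ( (√k_B + 1)²/√k_B − k_C (√k_B − 1)²/√k_B ) ]. -/
open Matrix Filter Topology

variable {n : ℕ}

open scoped RealInnerProductSpace

private theorem lemA' {b1 bn ν s : ℝ} (hbn : 0 < bn) (h1 : bn ≤ ν) (h2 : ν ≤ b1)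
    (hs0 : 0 < s) (hsq : s ^ 2 * bn = b1) :
    Real.sqrt ((b1 - ν) * (ν - bn)) ≤ ν * (s ^ 2 - 1) / (2 * s) := by
  have hb1 : b1 = s ^ 2 * bn := hsq.symm
  subst hb1
  have hs2 : 1 ≤ s ^ 2 := by
    have h : 1 * bn ≤ s ^ 2 * bn := by linarith
    exact le_of_mul_le_mul_right (by linarith) hbn
  have hs1 : 1 ≤ s := by nlinarith
  have hR0 : 0 ≤ ν * (s ^ 2 - 1) / (2 * s) := by
    apply div_nonneg
    · nlinarith
    · linarith
  have key : (s ^ 2 * bn - ν) * (ν - bn) ≤ (ν * (s ^ 2 - 1) / (2 * s)) ^ 2 := by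
    rw [div_pow, le_div_iff₀ (by positivity)]
    nlinarith [sq_nonneg (ν * (s ^ 2 + 1) - 2 * s ^ 2 * bn)]
  calc Real.sqrt ((s ^ 2 * bn - ν) * (ν - bn))
      ≤ Real.sqrt ((ν * (s ^ 2 - 1) / (2 * s)) ^ 2) := Real.sqrt_le_sqrt key
    _ = ν * (s ^ 2 - 1) / (2 * s) := Real.sqrt_sq hR0

private theorem lemB' {c1 cn μ s : ℝ} (h1 : cn ≤ μ) (h2 : μ ≤ c1) (hs1 : 1 ≤ s) :
    (cn * (s + 1) ^ 2 - c1 * (s - 1) ^ 2) / (4 * s) ≤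
      μ - (s ^ 2 - 1) / (2 * s) * Real.sqrt ((c1 - μ) * (μ - cn)) := by
  have hs0 : 0 < s := by linarith
  set q := Real.sqrt ((c1 - μ) * (μ - cn)) with hq
  have hq0 : 0 ≤ q := Real.sqrt_nonneg _
  have hq2 : q ^ 2 = (c1 - μ) * (μ - cn) := Real.sq_sqrt (by nlinarith)
  rw [div_le_iff₀ (by positivity)]
  have hexp : (μ - (s ^ 2 - 1) / (2 * s) * q) * (4 * s) = 4 * s * μ - 2 * (s ^ 2 - 1) * q := by
    field_simp; ring
  rw [hexp]
  have hA0 : 0 ≤ 4 * s * μ - cn * (s + 1) ^ 2 + c1 * (s - 1) ^ 2 := by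
    nlinarith [mul_nonneg (le_of_lt hs0) (sub_nonneg.2 h1),
      mul_nonneg (sub_nonneg.2 (le_trans h1 h2)) (sq_nonneg (s - 1))]
  have hT0 : 0 ≤ 2 * (s ^ 2 - 1) * q := by
    apply mul_nonneg _ hq0; nlinarith
  have hq2' : (s ^ 2 - 1) ^ 2 * q ^ 2 = (s ^ 2 - 1) ^ 2 * ((c1 - μ) * (μ - cn)) := by
    rw [hq2]
  have key : (2 * (s ^ 2 - 1) * q) ^ 2 ≤ (4 * s * μ - cn * (s + 1) ^ 2 + c1 * (s - 1) ^ 2) ^ 2 := by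
    nlinarith [sq_nonneg (2 * (s ^ 2 + 1) * μ - cn * (s + 1) ^ 2 - c1 * (s - 1) ^ 2), hq2']
  nlinarith [key, hA0, hT0]

private theorem inner_dot' (x y : EuclideanSpace ℝ (Fin n)) : ⟪x, y⟫ = x ⬝ᵥ y := by
  simp [PiLp.inner_apply, RCLike.inner_apply, dotProduct, mul_comm]

private theorem dot_symm' {A : Matrix (Fin n) (Fin n) ℝ} (hA : A.IsHermitian) (x y : Fin n → ℝ) :
    x ⬝ᵥ (A *ᵥ y) = (A *ᵥ x) ⬝ᵥ y := by
  have hAT : Aᵀ = A := by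
    ext i j
    have h := congrFun (congrFun hA i) j
    simpa [Matrix.conjTranspose_apply] using h
  rw [Matrix.dotProduct_mulVec, ← Matrix.mulVec_transpose, hAT]

private theorem rayleigh' [NeZero n] {A : Matrix (Fin n) (Fin n) ℝ} (hA : A.IsHermitian)
    (u : EuclideanSpace ℝ (Fin n)) (hu : ‖u‖ = 1) :
    minEig hA ≤ u ⬝ᵥ (A *ᵥ u) ∧ u ⬝ᵥ (A *ᵥ u) ≤ maxEig hA ∧
      (A *ᵥ u) ⬝ᵥ (A *ᵥ u) ≤
        (maxEig hA + minEig hA) * (u ⬝ᵥ (A *ᵥ u)) - maxEig hA * minEig hA := by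
  set b := hA.eigenvectorBasis with hb
  set lam := hA.eigenvalues with hlam
  set w : Fin n → ℝ := fun i => ⟪u, b i⟫ with hwdef
  have hlo : ∀ i, minEig hA ≤ lam i := fun i =>
    ciInf_le (Set.Finite.bddBelow (Set.finite_range lam)) i
  have hhi : ∀ i, lam i ≤ maxEig hA := fun i =>
    le_ciSup (Set.Finite.bddAbove (Set.finite_range lam)) i
  have hAb : ∀ i, ⟪b i, (WithLp.toLp 2 (A *ᵥ u) : EuclideanSpace ℝ (Fin n))⟫ = lam i * w i := by
    intro i
    rw [inner_dot', WithLp.ofLp_toLp, dot_symm' hA,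
      show A *ᵥ (b i : Fin n → ℝ) = lam i • (b i : Fin n → ℝ) from hA.mulVec_eigenvectorBasis i]
    rw [smul_dotProduct, ← inner_dot' (b i) u, real_inner_comm]
    simp [hwdef, smul_eq_mul]
  have hw1 : ∑ i, w i * w i = 1 := by
    have h := b.sum_inner_mul_inner u u
    simp only [real_inner_comm u] at h
    rw [real_inner_self_eq_norm_sq, hu] at h
    simpa [hwdef, real_inner_comm] using h
  have hν : u ⬝ᵥ (A *ᵥ u) = ∑ i, lam i * (w i * w i) := by
    have h := b.sum_inner_mul_inner u ((WithLp.toLp 2 (A *ᵥ u) : EuclideanSpace ℝ (Fin n)))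
    rw [inner_dot', WithLp.ofLp_toLp] at h
    rw [← h]
    apply Finset.sum_congr rfl
    intro i _
    rw [hAb i]
    ring
  have hA2 : (A *ᵥ u) ⬝ᵥ (A *ᵥ u) = ∑ i, (lam i)^2 * (w i * w i) := by
    have h := b.sum_inner_mul_inner ((WithLp.toLp 2 (A *ᵥ u) : EuclideanSpace ℝ (Fin n)))
      ((WithLp.toLp 2 (A *ᵥ u) : EuclideanSpace ℝ (Fin n)))
    rw [inner_dot', WithLp.ofLp_toLp] at h
    rw [← h]
    apply Finset.sum_congr rfl
    intro i _
    rw [real_inner_comm, hAb i]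
    ring
  have hwnn : ∀ i, 0 ≤ w i * w i := fun i => mul_self_nonneg _
  refine ⟨?_, ?_, ?_⟩
  · rw [hν]
    calc minEig hA = ∑ i, minEig hA * (w i * w i) := by
          rw [← Finset.mul_sum, hw1, mul_one]
      _ ≤ ∑ i, lam i * (w i * w i) :=
          Finset.sum_le_sum fun i _ => mul_le_mul_of_nonneg_right (hlo i) (hwnn i)
  · rw [hν]
    calc ∑ i, lam i * (w i * w i) ≤ ∑ i, maxEig hA * (w i * w i) :=
          Finset.sum_le_sum fun i _ => mul_le_mul_of_nonneg_right (hhi i) (hwnn i)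
      _ = maxEig hA := by rw [← Finset.mul_sum, hw1, mul_one]
  · rw [hν, hA2]
    have step : ∀ i, (lam i)^2 * (w i * w i) ≤
        ((maxEig hA + minEig hA) * lam i - maxEig hA * minEig hA) * (w i * w i) := by
      intro i
      apply mul_le_mul_of_nonneg_right _ (hwnn i)
      nlinarith [mul_nonneg (sub_nonneg.2 (hhi i)) (sub_nonneg.2 (hlo i))]
    calc ∑ i, (lam i)^2 * (w i * w i)
        ≤ ∑ i, ((maxEig hA + minEig hA) * lam i - maxEig hA * minEig hA) * (w i * w i) :=
          Finset.sum_le_sum fun i _ => step i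
      _ = (maxEig hA + minEig hA) * (∑ i, lam i * (w i * w i))
            - maxEig hA * minEig hA := by
          have hring : ∀ i, ((maxEig hA + minEig hA) * lam i - maxEig hA * minEig hA) * (w i * w i)
              = (maxEig hA + minEig hA) * (lam i * (w i * w i))
                - maxEig hA * minEig hA * (w i * w i) := fun i => by ring
          simp only [hring]
          rw [Finset.sum_sub_distrib, ← Finset.mul_sum, ← Finset.mul_sum, hw1, mul_one]

private theorem sq_helper {x e b1 bn ν : ℝ} (h1 : x = e - ν * ν)
    (h2 : e ≤ (b1 + bn) * ν - b1 * bn) : x ≤ (b1 - ν) * (ν - bn) := by nlinarith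

set_option maxHeartbeats 1000000 in
private theorem combine' {b1 bn c1 cn s kC ν μ G np nq : ℝ}
    (hbn_pos : 0 < bn) (hcn_pos : 0 < cn) (hb1bn : bn ≤ b1) (hc1cn : cn ≤ c1)
    (hs0 : 0 < s) (hs1 : 1 ≤ s) (hsq : s ^ 2 * bn = b1)
    (hν1 : bn ≤ ν) (hν2 : ν ≤ b1) (hμ1 : cn ≤ μ) (hμ2 : μ ≤ c1)
    (hnp0 : 0 ≤ np) (hnq0 : 0 ≤ nq)
    (hnp2 : np ^ 2 ≤ (b1 - ν) * (ν - bn)) (hnq2 : nq ^ 2 ≤ (c1 - μ) * (μ - cn))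
    (hG : ν * μ - np * nq ≤ G) (hkC : kC = c1 / cn) :
    min (b1 * c1 / 2 * ((s + 1) ^ 2 / s - kC * ((s - 1) ^ 2 / s)))
        (bn * cn / 2 * ((s + 1) ^ 2 / s - kC * ((s - 1) ^ 2 / s))) ≤ 2 * G := by
  obtain ⟨P, hPdef⟩ : ∃ P, P = Real.sqrt ((b1 - ν) * (ν - bn)) := ⟨_, rfl⟩
  obtain ⟨Q, hQdef⟩ : ∃ Q, Q = Real.sqrt ((c1 - μ) * (μ - cn)) := ⟨_, rfl⟩
  have hnp : np ≤ P := by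
    rw [hPdef, ← Real.sqrt_sq hnp0]; exact Real.sqrt_le_sqrt hnp2
  have hnq : nq ≤ Q := by
    rw [hQdef, ← Real.sqrt_sq hnq0]; exact Real.sqrt_le_sqrt hnq2
  have hQ0 : 0 ≤ Q := by rw [hQdef]; exact Real.sqrt_nonneg _
  have hPQ : np * nq ≤ P * Q := mul_le_mul hnp hnq hnq0 (le_trans hnp0 hnp)
  have hlow : ν * μ - P * Q ≤ G := by linarith
  have t1 : P ≤ ν * (s ^ 2 - 1) / (2 * s) := by
    rw [hPdef]; exact lemA' hbn_pos hν1 hν2 hs0 hsq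
  have t2 : (cn * (s + 1) ^ 2 - c1 * (s - 1) ^ 2) / (4 * s) ≤
      μ - (s ^ 2 - 1) / (2 * s) * Q := by
    rw [hQdef]; exact lemB' hμ1 hμ2 hs1
  obtain ⟨d, hddef⟩ : ∃ d, d = (cn * (s + 1) ^ 2 - c1 * (s - 1) ^ 2) / (4 * s) := ⟨_, rfl⟩
  obtain ⟨φ, hφdef⟩ : ∃ φ, φ = μ - (s ^ 2 - 1) / (2 * s) * Q := ⟨_, rfl⟩
  have t2' : d ≤ φ := by rw [hddef, hφdef]; exact t2
  have hPQ2 : P * Q ≤ ν * (s ^ 2 - 1) / (2 * s) * Q :=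
    mul_le_mul_of_nonneg_right t1 hQ0
  have hfφ : ν * φ ≤ ν * μ - P * Q := by
    have hexp : ν * φ = ν * μ - ν * (s ^ 2 - 1) / (2 * s) * Q := by
      rw [hφdef]; ring
    linarith
  have hcore : min (bn * d) (b1 * d) ≤ ν * φ := by
    rcases le_or_gt 0 φ with h | h
    · calc min (bn * d) (b1 * d) ≤ bn * d := min_le_left _ _
        _ ≤ bn * φ := mul_le_mul_of_nonneg_left t2' (le_of_lt hbn_pos)
        _ ≤ ν * φ := mul_le_mul_of_nonneg_right hν1 h
    · calc min (bn * d) (b1 * d) ≤ b1 * d := min_le_right _ _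
        _ ≤ b1 * φ := mul_le_mul_of_nonneg_left t2' (by linarith)
        _ ≤ ν * φ := mul_le_mul_of_nonpos_right hν2 h.le
  have hmain : 2 * min (bn * d) (b1 * d) ≤ 2 * G := by
    have h := le_trans hcore (le_trans hfφ hlow)
    linarith
  refine le_trans ?_ hmain
  have hcnne : cn ≠ 0 := ne_of_gt hcn_pos
  have hsne : s ≠ 0 := ne_of_gt hs0
  have hE2 : bn * cn / 2 * ((s + 1) ^ 2 / s - kC * ((s - 1) ^ 2 / s)) = 2 * (bn * d) := by
    rw [hkC, hddef]; field_simp; ring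
  rcases le_or_gt 0 d with hd0 | hd0
  · have hmin : min (bn * d) (b1 * d) = bn * d := min_eq_left (mul_le_mul_of_nonneg_right hb1bn hd0)
    rw [hmin, ← hE2]
    exact min_le_right _ _
  · have hmin : min (bn * d) (b1 * d) = b1 * d := min_eq_right (mul_le_mul_of_nonpos_right hb1bn hd0.le)
    rw [hmin]
    have hEd : (s + 1) ^ 2 / s - kC * ((s - 1) ^ 2 / s) = 4 * d / cn := by
      rw [hkC, hddef]; field_simp
    have hb1pos : 0 < b1 := lt_of_lt_of_le hbn_pos hb1bn
    have hkey : b1 * c1 / 2 * (4 * d / cn) ≤ 2 * (b1 * d) := by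
      have h1 : c1 * d ≤ cn * d := mul_le_mul_of_nonpos_right hc1cn hd0.le
      have h2 : b1 * (c1 * d) ≤ b1 * (cn * d) := mul_le_mul_of_nonneg_left h1 hb1pos.le
      have heq : b1 * c1 / 2 * (4 * d / cn) = 2 * (b1 * (c1 * d)) / cn := by ring
      rw [heq, div_le_iff₀ hcn_pos]
      calc 2 * (b1 * (c1 * d)) ≤ 2 * (b1 * (cn * d)) := by linarith
        _ = 2 * (b1 * d) * cn := by ring
    calc min (b1 * c1 / 2 * ((s + 1) ^ 2 / s - kC * ((s - 1) ^ 2 / s)))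
          (bn * cn / 2 * ((s + 1) ^ 2 / s - kC * ((s - 1) ^ 2 / s)))
        ≤ b1 * c1 / 2 * ((s + 1) ^ 2 / s - kC * ((s - 1) ^ 2 / s)) := min_le_left _ _
      _ = b1 * c1 / 2 * (4 * d / cn) := by rw [hEd]
      _ ≤ 2 * (b1 * d) := hkey

set_option maxHeartbeats 1000000

theorem stmt3 [NeZero n] (B C : Matrix (Fin n) (Fin n) ℝ)
    (hB : B.PosDef) (hC : C.PosDef)
    (hBC : (B * C + C * B).IsHermitian)
    (kB kC : ℝ) (hkB : kB = maxEig hB.1 / minEig hB.1)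
    (hkC : kC = maxEig hC.1 / minEig hC.1) :
    minEig hBC ≥
      min (maxEig hB.1 * maxEig hC.1 / 2 *
            ((Real.sqrt kB + 1) ^ 2 / Real.sqrt kB -
              kC * ((Real.sqrt kB - 1) ^ 2 / Real.sqrt kB)))
          (minEig hB.1 * minEig hC.1 / 2 *
            ((Real.sqrt kB + 1) ^ 2 / Real.sqrt kB -
              kC * ((Real.sqrt kB - 1) ^ 2 / Real.sqrt kB))) := by
  set s := Real.sqrt kB with hsdef
  set b1 := maxEig hB.1 with hb1def
  set bn := minEig hB.1 with hbndef
  set c1 := maxEig hC.1 with hc1def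
  set cn := minEig hC.1 with hcndef
  clear_value s b1 bn c1 cn
  -- positivity and ordering of eigen extremes
  obtain ⟨iB, hiB⟩ := exists_eq_ciInf_of_finite (f := hB.1.eigenvalues)
  obtain ⟨iC, hiC⟩ := exists_eq_ciInf_of_finite (f := hC.1.eigenvalues)
  have hbn_pos : 0 < bn := by
    rw [hbndef, minEig, ← hiB]; exact hB.eigenvalues_pos iB
  have hcn_pos : 0 < cn := by
    rw [hcndef, minEig, ← hiC]; exact hC.eigenvalues_pos iC
  have hb1bn : bn ≤ b1 := by
    rw [hbndef, hb1def, minEig, ← hiB]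
    exact le_ciSup (Set.Finite.bddAbove (Set.finite_range _)) iB
  have hc1cn : cn ≤ c1 := by
    rw [hcndef, hc1def, minEig, ← hiC]
    exact le_ciSup (Set.Finite.bddAbove (Set.finite_range _)) iC
  -- facts about s
  have hkB0 : 0 < kB := by
    rw [hkB]; exact div_pos (lt_of_lt_of_le hbn_pos hb1bn) hbn_pos
  have hs0 : 0 < s := by rw [hsdef]; exact Real.sqrt_pos.2 hkB0
  have hsq : s ^ 2 * bn = b1 := by
    rw [hsdef, Real.sq_sqrt (le_of_lt hkB0), hkB]
    field_simp
  have hs1 : 1 ≤ s := by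
    have hs2 : 1 ≤ s ^ 2 := by
      have h : 1 * bn ≤ s ^ 2 * bn := by rw [hsq]; linarith
      exact le_of_mul_le_mul_right (by linarith) hbn_pos
    nlinarith
  -- minimal eigenvector of B*C + C*B
  obtain ⟨i0, hi0⟩ := exists_eq_ciInf_of_finite (f := hBC.eigenvalues)
  set u : EuclideanSpace ℝ (Fin n) := hBC.eigenvectorBasis i0 with hudef
  have hu : ‖u‖ = 1 := hBC.eigenvectorBasis.orthonormal.1 i0
  have huu : u ⬝ᵥ u = 1 := by
    rw [← inner_dot' u u, real_inner_self_eq_norm_sq, hu]; norm_num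
  have hmineq : u ⬝ᵥ ((B * C + C * B) *ᵥ u) = minEig hBC := by
    rw [show (B * C + C * B) *ᵥ (u : Fin n → ℝ) = hBC.eigenvalues i0 • (u : Fin n → ℝ) from
      hBC.mulVec_eigenvectorBasis i0]
    rw [dotProduct_smul, smul_eq_mul, huu, mul_one, hi0, minEig]
  have hQF : u ⬝ᵥ ((B * C + C * B) *ᵥ u) = 2 * ((B *ᵥ u) ⬝ᵥ (C *ᵥ u)) := by
    have h1 : u ⬝ᵥ ((B * C) *ᵥ u) = (B *ᵥ u) ⬝ᵥ (C *ᵥ u) := by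
      rw [← Matrix.mulVec_mulVec, dot_symm' hB.1]
    have h2 : u ⬝ᵥ ((C * B) *ᵥ u) = (B *ᵥ u) ⬝ᵥ (C *ᵥ u) := by
      rw [← Matrix.mulVec_mulVec, dot_symm' hC.1, dotProduct_comm]
    rw [Matrix.add_mulVec, dotProduct_add, h1, h2]
    ring
  clear_value u
  -- Rayleigh data
  obtain ⟨hν1, hν2, hν3⟩ := rayleigh' hB.1 u hu
  obtain ⟨hμ1, hμ2, hμ3⟩ := rayleigh' hC.1 u hu
  set ν := u ⬝ᵥ (B *ᵥ u) with hνdef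
  set μ := u ⬝ᵥ (C *ᵥ u) with hμdef
  clear_value ν μ
  have hν1' : bn ≤ ν := by rw [hbndef]; exact hν1
  have hν2' : ν ≤ b1 := by rw [hb1def]; exact hν2
  have hν3' : (B *ᵥ u) ⬝ᵥ (B *ᵥ u) ≤ (b1 + bn) * ν - b1 * bn := by
    rw [hb1def, hbndef]; exact hν3
  have hμ1' : cn ≤ μ := by rw [hcndef]; exact hμ1
  have hμ2' : μ ≤ c1 := by rw [hc1def]; exact hμ2
  have hμ3' : (C *ᵥ u) ⬝ᵥ (C *ᵥ u) ≤ (c1 + cn) * μ - c1 * cn := by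
    rw [hc1def, hcndef]; exact hμ3
  -- centered vectors
  set Bu : EuclideanSpace ℝ (Fin n) := (WithLp.equiv 2 (Fin n → ℝ)).symm (B *ᵥ u) with hBudef
  set Cu : EuclideanSpace ℝ (Fin n) := (WithLp.equiv 2 (Fin n → ℝ)).symm (C *ᵥ u) with hCudef
  have hiBC : ⟪Bu, Cu⟫ = (B *ᵥ u) ⬝ᵥ (C *ᵥ u) := inner_dot' Bu Cu
  have hiBB : ⟪Bu, Bu⟫ = (B *ᵥ u) ⬝ᵥ (B *ᵥ u) := inner_dot' Bu Bu
  have hiCC : ⟪Cu, Cu⟫ = (C *ᵥ u) ⬝ᵥ (C *ᵥ u) := inner_dot' Cu Cu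
  have hiuu : ⟪u, u⟫ = (1 : ℝ) := by rw [inner_dot' u u]; exact huu
  have hiBu : ⟪Bu, u⟫ = ν := by
    rw [inner_dot' Bu u]
    show (B *ᵥ u) ⬝ᵥ (u : Fin n → ℝ) = ν
    rw [dotProduct_comm]
    exact hνdef.symm
  have hiuB : ⟪u, Bu⟫ = ν := by rw [real_inner_comm]; exact hiBu
  have hiCu : ⟪Cu, u⟫ = μ := by
    rw [inner_dot' Cu u]
    show (C *ᵥ u) ⬝ᵥ (u : Fin n → ℝ) = μ
    rw [dotProduct_comm]
    exact hμdef.symm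
  have hiuC : ⟪u, Cu⟫ = μ := by rw [real_inner_comm]; exact hiCu
  set p : EuclideanSpace ℝ (Fin n) := Bu - ν • u with hpdef
  set q : EuclideanSpace ℝ (Fin n) := Cu - μ • u with hqdef
  have hpq : ⟪p, q⟫ = (B *ᵥ u) ⬝ᵥ (C *ᵥ u) - ν * μ := by
    simp only [hpdef, hqdef, inner_sub_left, inner_sub_right, real_inner_smul_left,
      real_inner_smul_right, hiBC, hiBu, hiuC, hiuu]
    ring
  have hpp : ⟪p, p⟫ = (B *ᵥ u) ⬝ᵥ (B *ᵥ u) - ν * ν := by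
    simp only [hpdef, inner_sub_left, inner_sub_right, real_inner_smul_left,
      real_inner_smul_right, hiBB, hiBu, hiuB, hiuu]
    ring
  have hqq : ⟪q, q⟫ = (C *ᵥ u) ⬝ᵥ (C *ᵥ u) - μ * μ := by
    simp only [hqdef, inner_sub_left, inner_sub_right, real_inner_smul_left,
      real_inner_smul_right, hiCC, hiCu, hiuC, hiuu]
    ring
  set G := (B *ᵥ u) ⬝ᵥ (C *ᵥ u) with hGdef
  have hCS : -(‖p‖ * ‖q‖) ≤ ⟪p, q⟫ := (abs_le.1 (abs_real_inner_le_norm p q)).1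
  have hppn : ‖p‖ ^ 2 = (B *ᵥ u) ⬝ᵥ (B *ᵥ u) - ν * ν := by
    rw [← real_inner_self_eq_norm_sq]; exact hpp
  have hqqn : ‖q‖ ^ 2 = (C *ᵥ u) ⬝ᵥ (C *ᵥ u) - μ * μ := by
    rw [← real_inner_self_eq_norm_sq]; exact hqq
  clear_value G
  have hmin2 : minEig hBC = 2 * G := by rw [← hmineq, hQF]
  have hnp2 : ‖p‖ ^ 2 ≤ (b1 - ν) * (ν - bn) := sq_helper hppn hν3'
  have hnq2 : ‖q‖ ^ 2 ≤ (c1 - μ) * (μ - cn) := sq_helper hqqn hμ3'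
  have hG : ν * μ - ‖p‖ * ‖q‖ ≤ G := by
    have := hpq
    linarith only [hCS, hpq]
  rw [ge_iff_le, hmin2]
  exact combine' hbn_pos hcn_pos hb1bn hc1cn hs0 hs1 hsq hν1' hν2' hμ1' hμ2'
    (norm_nonneg p) (norm_nonneg q) hnp2 hnq2 hG hkC
end

section
/- Let Q be an n×n real symmetric positive definite matrix with spectral condition number k_Q = λ₁(Q)/λ_n(Q), and let A be a diagonal n×n matrix with positive diagonal entries, whose largest diagonal entry is α_max and smallest is α_min, so that its condition number is k_A = α_max/α_min. If α_max/α_min < k_Q, then the spectral condition number of Q + A satisfies k_{Q+A} < k_Q. -/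
open Matrix Filter Topology

variable {n : ℕ}

lemma aux_rayleigh_le [NeZero n] {M : Matrix (Fin n) (Fin n) ℝ} (hM : M.IsHermitian)
    (x : Fin n → ℝ) : x ⬝ᵥ (M *ᵥ x) ≤ maxEig hM * (x ⬝ᵥ x) := by
  haveI : Nonempty (Fin n) := ⟨⟨0, Nat.pos_of_ne_zero (NeZero.ne n)⟩⟩
  set c := maxEig hM with hc
  have hdiagPSD : (diagonal (fun i => c - hM.eigenvalues i)).PosSemidef :=
    posSemidef_diagonal_iff.mpr fun i => sub_nonneg.mpr
      (le_ciSup (Set.Finite.bddAbove (Set.finite_range _)) i)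
  have h1 : c • (1 : Matrix (Fin n) (Fin n) ℝ) - M =
      (hM.eigenvectorUnitary : Matrix (Fin n) (Fin n) ℝ) *
      diagonal (fun i => c - hM.eigenvalues i) *
      ((hM.eigenvectorUnitary : Matrix (Fin n) (Fin n) ℝ))ᴴ := by
    have hU : (hM.eigenvectorUnitary : Matrix (Fin n) (Fin n) ℝ) *
        ((hM.eigenvectorUnitary : Matrix (Fin n) (Fin n) ℝ))ᴴ = 1 :=
      mem_unitaryGroup_iff.mp hM.eigenvectorUnitary.2
    have hD : diagonal (fun i => c - hM.eigenvalues i)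
        = c • (1 : Matrix (Fin n) (Fin n) ℝ) - diagonal hM.eigenvalues := by
      ext i j
      rcases eq_or_ne i j with rfl | h
      · simp [diagonal_apply_eq, Matrix.one_apply_eq]
      · simp [diagonal_apply_ne _ h, Matrix.one_apply_ne h]
    have hsp := hM.spectral_theorem
    have hco : (RCLike.ofReal ∘ hM.eigenvalues : Fin n → ℝ) = hM.eigenvalues := rfl
    rw [hco, Unitary.conjStarAlgAut_apply, Matrix.star_eq_conjTranspose] at hsp
    rw [hD, mul_sub, sub_mul, Matrix.mul_smul, Matrix.smul_mul, mul_one, hU, ← hsp]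
  have hPSD : (c • (1 : Matrix (Fin n) (Fin n) ℝ) - M).PosSemidef := by
    rw [h1]; exact hdiagPSD.mul_mul_conjTranspose_same _
  have h2 := hPSD.dotProduct_mulVec_nonneg x
  simp only [sub_mulVec, smul_mulVec, one_mulVec, dotProduct_sub, dotProduct_smul,
    star_trivial, smul_eq_mul] at h2
  linarith

lemma aux_rayleigh_ge [NeZero n] {M : Matrix (Fin n) (Fin n) ℝ} (hM : M.IsHermitian)
    (x : Fin n → ℝ) : minEig hM * (x ⬝ᵥ x) ≤ x ⬝ᵥ (M *ᵥ x) := by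
  haveI : Nonempty (Fin n) := ⟨⟨0, Nat.pos_of_ne_zero (NeZero.ne n)⟩⟩
  set c := minEig hM with hc
  have hdiagPSD : (diagonal (fun i => hM.eigenvalues i - c)).PosSemidef :=
    posSemidef_diagonal_iff.mpr fun i => sub_nonneg.mpr
      (ciInf_le (Set.Finite.bddBelow (Set.finite_range _)) i)
  have h1 : M - c • (1 : Matrix (Fin n) (Fin n) ℝ) =
      (hM.eigenvectorUnitary : Matrix (Fin n) (Fin n) ℝ) *
      diagonal (fun i => hM.eigenvalues i - c) *
      ((hM.eigenvectorUnitary : Matrix (Fin n) (Fin n) ℝ))ᴴ := by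
    have hU : (hM.eigenvectorUnitary : Matrix (Fin n) (Fin n) ℝ) *
        ((hM.eigenvectorUnitary : Matrix (Fin n) (Fin n) ℝ))ᴴ = 1 :=
      mem_unitaryGroup_iff.mp hM.eigenvectorUnitary.2
    have hD : diagonal (fun i => hM.eigenvalues i - c)
        = diagonal hM.eigenvalues - c • (1 : Matrix (Fin n) (Fin n) ℝ) := by
      ext i j
      rcases eq_or_ne i j with rfl | h
      · simp [diagonal_apply_eq, Matrix.one_apply_eq]
      · simp [diagonal_apply_ne _ h, Matrix.one_apply_ne h]
    have hsp := hM.spectral_theorem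
    have hco : (RCLike.ofReal ∘ hM.eigenvalues : Fin n → ℝ) = hM.eigenvalues := rfl
    rw [hco, Unitary.conjStarAlgAut_apply, Matrix.star_eq_conjTranspose] at hsp
    rw [hD, mul_sub, sub_mul, Matrix.mul_smul, Matrix.smul_mul, mul_one, hU, ← hsp]
  have hPSD : (M - c • (1 : Matrix (Fin n) (Fin n) ℝ)).PosSemidef := by
    rw [h1]; exact hdiagPSD.mul_mul_conjTranspose_same _
  have h2 := hPSD.dotProduct_mulVec_nonneg x
  simp only [sub_mulVec, smul_mulVec, one_mulVec, dotProduct_sub, dotProduct_smul,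
    star_trivial, smul_eq_mul] at h2
  linarith

lemma aux_diag_le [NeZero n] (α : Fin n → ℝ) (x : Fin n → ℝ) :
    x ⬝ᵥ (diagonal α *ᵥ x) ≤ (⨆ i, α i) * (x ⬝ᵥ x) := by
  haveI : Nonempty (Fin n) := ⟨⟨0, Nat.pos_of_ne_zero (NeZero.ne n)⟩⟩
  simp only [dotProduct, mulVec_diagonal, Finset.mul_sum]
  refine Finset.sum_le_sum fun i _ => ?_
  have h1 : α i ≤ ⨆ j, α j := le_ciSup (Set.Finite.bddAbove (Set.finite_range _)) i
  have h2 : 0 ≤ x i * x i := mul_self_nonneg _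
  calc x i * (α i * x i) = α i * (x i * x i) := by ring
    _ ≤ (⨆ j, α j) * (x i * x i) := mul_le_mul_of_nonneg_right h1 h2

lemma aux_diag_ge [NeZero n] (α : Fin n → ℝ) (x : Fin n → ℝ) :
    (⨅ i, α i) * (x ⬝ᵥ x) ≤ x ⬝ᵥ (diagonal α *ᵥ x) := by
  haveI : Nonempty (Fin n) := ⟨⟨0, Nat.pos_of_ne_zero (NeZero.ne n)⟩⟩
  simp only [dotProduct, mulVec_diagonal, Finset.mul_sum]
  refine Finset.sum_le_sum fun i _ => ?_
  have h1 : (⨅ j, α j) ≤ α i := ciInf_le (Set.Finite.bddBelow (Set.finite_range _)) i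
  have h2 : 0 ≤ x i * x i := mul_self_nonneg _
  calc (⨅ j, α j) * (x i * x i) ≤ α i * (x i * x i) := mul_le_mul_of_nonneg_right h1 h2
    _ = x i * (α i * x i) := by ring

lemma aux_eigvec_pos [NeZero n] {M : Matrix (Fin n) (Fin n) ℝ} (hM : M.IsHermitian)
    (i : Fin n) : 0 < ⇑(hM.eigenvectorBasis i) ⬝ᵥ ⇑(hM.eigenvectorBasis i) := by
  set v : Fin n → ℝ := ⇑(hM.eigenvectorBasis i) with hv
  have hb1 : ‖hM.eigenvectorBasis i‖ = 1 := hM.eigenvectorBasis.orthonormal.1 i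
  have hvne : v ≠ 0 := by
    intro h
    have h0 : hM.eigenvectorBasis i = 0 := by
      ext j
      exact congrFun h j
    rw [h0] at hb1
    simp at hb1
  have h1 : 0 ≤ v ⬝ᵥ v := Finset.sum_nonneg fun i _ => mul_self_nonneg _
  have h2 : v ⬝ᵥ v ≠ 0 := fun h => hvne (dotProduct_self_eq_zero.mp h)
  exact h1.lt_of_ne' h2

theorem stmt6 [NeZero n] (Q A : Matrix (Fin n) (Fin n) ℝ) (hQ : Q.PosDef)
    (α : Fin n → ℝ) (hA : A = Matrix.diagonal α) (hαpos : ∀ i, 0 < α i)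
    (hQA : (Q + A).IsHermitian)
    (αmax αmin : ℝ) (hαmax : αmax = ⨆ i, α i) (hαmin : αmin = ⨅ i, α i)
    (hcond : αmax / αmin < maxEig hQ.1 / minEig hQ.1) :
    maxEig hQA / minEig hQA < maxEig hQ.1 / minEig hQ.1 := by
  haveI : Nonempty (Fin n) := ⟨⟨0, Nat.pos_of_ne_zero (NeZero.ne n)⟩⟩
  set lmax := maxEig hQ.1 with hlmax
  set lmin := minEig hQ.1 with hlmin
  -- positivity facts
  have hlmin_pos : 0 < lmin := by
    obtain ⟨i, hi⟩ := exists_eq_ciInf_of_finite (f := hQ.1.eigenvalues)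
    rw [hlmin, minEig, ← hi]
    exact hQ.eigenvalues_pos i
  have hlminmax : lmin ≤ lmax := by
    rw [hlmin, hlmax, minEig, maxEig]
    exact le_trans (ciInf_le (Set.Finite.bddBelow (Set.finite_range _)) (Classical.arbitrary _))
      (le_ciSup (Set.Finite.bddAbove (Set.finite_range _)) (Classical.arbitrary _))
  have hαmin_pos : 0 < αmin := by
    obtain ⟨i, hi⟩ := exists_eq_ciInf_of_finite (f := α)
    rw [hαmin, ← hi]
    exact hαpos i
  have hαminmax : αmin ≤ αmax := by
    rw [hαmin, hαmax]
    exact le_trans (ciInf_le (Set.Finite.bddBelow (Set.finite_range _)) (Classical.arbitrary _))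
      (le_ciSup (Set.Finite.bddAbove (Set.finite_range _)) (Classical.arbitrary _))
  -- upper bound on maxEig hQA
  have hub : maxEig hQA ≤ lmax + αmax := by
    obtain ⟨i0, hi0⟩ := exists_eq_ciSup_of_finite (f := hQA.eigenvalues)
    set v : Fin n → ℝ := ⇑(hQA.eigenvectorBasis i0) with hv
    have hvv : 0 < v ⬝ᵥ v := aux_eigvec_pos hQA i0
    have he : (Q + A) *ᵥ v = maxEig hQA • v := by
      rw [hQA.mulVec_eigenvectorBasis i0, maxEig, ← hi0]
    have e1 : maxEig hQA * (v ⬝ᵥ v) = v ⬝ᵥ (Q *ᵥ v) + v ⬝ᵥ (diagonal α *ᵥ v) := by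
      rw [← dotProduct_add, ← add_mulVec, ← hA, he, dotProduct_smul, smul_eq_mul]
    have b1 : v ⬝ᵥ (Q *ᵥ v) ≤ lmax * (v ⬝ᵥ v) := aux_rayleigh_le hQ.1 v
    have b2 : v ⬝ᵥ (diagonal α *ᵥ v) ≤ αmax * (v ⬝ᵥ v) := by
      rw [hαmax]; exact aux_diag_le α v
    have : maxEig hQA * (v ⬝ᵥ v) ≤ (lmax + αmax) * (v ⬝ᵥ v) := by
      rw [e1]; nlinarith
    exact le_of_mul_le_mul_right (by linarith [this]) hvv
  -- lower bound on minEig hQA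
  have hlb : lmin + αmin ≤ minEig hQA := by
    obtain ⟨i0, hi0⟩ := exists_eq_ciInf_of_finite (f := hQA.eigenvalues)
    set v : Fin n → ℝ := ⇑(hQA.eigenvectorBasis i0) with hv
    have hvv : 0 < v ⬝ᵥ v := aux_eigvec_pos hQA i0
    have he : (Q + A) *ᵥ v = minEig hQA • v := by
      rw [hQA.mulVec_eigenvectorBasis i0, minEig, ← hi0]
    have e1 : minEig hQA * (v ⬝ᵥ v) = v ⬝ᵥ (Q *ᵥ v) + v ⬝ᵥ (diagonal α *ᵥ v) := by
      rw [← dotProduct_add, ← add_mulVec, ← hA, he, dotProduct_smul, smul_eq_mul]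
    have b1 : lmin * (v ⬝ᵥ v) ≤ v ⬝ᵥ (Q *ᵥ v) := aux_rayleigh_ge hQ.1 v
    have b2 : αmin * (v ⬝ᵥ v) ≤ v ⬝ᵥ (diagonal α *ᵥ v) := by
      rw [hαmin]; exact aux_diag_ge α v
    have : (lmin + αmin) * (v ⬝ᵥ v) ≤ minEig hQA * (v ⬝ᵥ v) := by
      rw [e1]; nlinarith
    exact le_of_mul_le_mul_right (by linarith [this]) hvv
  have hden_pos : 0 < lmin + αmin := by linarith
  have hμmin_pos : 0 < minEig hQA := lt_of_lt_of_le hden_pos hlb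
  have hcross : αmax * lmin < lmax * αmin := (div_lt_div_iff₀ hαmin_pos hlmin_pos).mp hcond
  have step1 : maxEig hQA / minEig hQA ≤ (lmax + αmax) / (lmin + αmin) :=
    div_le_div₀ (by nlinarith) hub hden_pos hlb
  have step2 : (lmax + αmax) / (lmin + αmin) < lmax / lmin := by
    rw [div_lt_div_iff₀ hden_pos hlmin_pos]
    nlinarith
  exact lt_of_le_of_lt step1 step2
end

section
/- Let Q be an n×n real symmetric positive definite matrix with spectral condition number k_Q, let r ∈ ℝⁿ, and let A be a diagonal n×n matrix with positive diagonal entries α_1, …, α_n and α_max := max_i α_i. Define x̂ = −Q⁻¹r and x̂_A = −(Q + A)⁻¹ r. Then the regularization error e_A := ‖x̂ − x̂_A‖₂ satisfies e_A ≤ (‖r‖₂ k_Q² α_max) / (‖Q‖₂² + ‖Q‖₂ k_Q α_max). -/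
open Matrix Filter Topology

variable {n : ℕ}

namespace Stmt9Aux

lemma dot_swap (M : Matrix (Fin n) (Fin n) ℝ) (hM : M.IsHermitian) (u v : Fin n → ℝ) :
    u ⬝ᵥ (M *ᵥ v) = (M *ᵥ u) ⬝ᵥ v := by
  have hs : Mᵀ = M := by rw [← Matrix.conjTranspose_eq_transpose_of_trivial]; exact hM
  rw [Matrix.dotProduct_mulVec, ← Matrix.mulVec_transpose, hs]

lemma quad_conj (V : Matrix (Fin n) (Fin n) ℝ)
    (d : Fin n → ℝ) (x : Fin n → ℝ) :
    x ⬝ᵥ ((V * Matrix.diagonal d * star V) *ᵥ x) = ∑ i, d i * ((star V *ᵥ x) i)^2 := by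
  set y := star V *ᵥ x with hy
  have h1 : (V * Matrix.diagonal d * star V) *ᵥ x = V *ᵥ (Matrix.diagonal d *ᵥ y) := by
    rw [hy, Matrix.mulVec_mulVec, Matrix.mulVec_mulVec]
  rw [h1, Matrix.dotProduct_mulVec, ← Matrix.mulVec_transpose]
  have h2 : Vᵀ = star V := by
    rw [Matrix.star_eq_conjTranspose, Matrix.conjTranspose_eq_transpose_of_trivial]
  rw [h2, ← hy]
  simp [dotProduct, Matrix.mulVec_diagonal, sq]
  exact Finset.sum_congr rfl fun i _ => by ring

lemma dot_conj_self (V : Matrix (Fin n) (Fin n) ℝ) (hV : V * star V = 1) (x : Fin n → ℝ) :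
    (star V *ᵥ x) ⬝ᵥ (star V *ᵥ x) = x ⬝ᵥ x := by
  rw [Matrix.dotProduct_mulVec, ← Matrix.mulVec_transpose]
  have h2 : (star V)ᵀ = V := by
    rw [Matrix.star_eq_conjTranspose, Matrix.conjTranspose_eq_transpose_of_trivial,
      Matrix.transpose_transpose]
  rw [h2, Matrix.mulVec_mulVec, hV, Matrix.one_mulVec]

lemma spec_thm (M : Matrix (Fin n) (Fin n) ℝ) (hM : M.IsHermitian) :
    M = (hM.eigenvectorUnitary : Matrix (Fin n) (Fin n) ℝ) * Matrix.diagonal hM.eigenvalues *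
      star (hM.eigenvectorUnitary : Matrix (Fin n) (Fin n) ℝ) := by
  simpa using hM.spectral_theorem

lemma norm_mulVec_le (M : Matrix (Fin n) (Fin n) ℝ) (hM : M.IsHermitian) (c : ℝ) (hc : 0 ≤ c)
    (h : ∀ j, |hM.eigenvalues j| ≤ c) (x : Fin n → ℝ) :
    enorm2 (M *ᵥ x) ≤ c * enorm2 x := by
  set V := (hM.eigenvectorUnitary : Matrix (Fin n) (Fin n) ℝ) with hVdef
  have hV : V * star V = 1 := (Matrix.mem_unitaryGroup_iff).mp hM.eigenvectorUnitary.2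
  have hV' : star V * V = 1 := (Matrix.mem_unitaryGroup_iff').mp hM.eigenvectorUnitary.2
  have hMsq : M * M = V * Matrix.diagonal (hM.eigenvalues * hM.eigenvalues) * star V := by
    conv_lhs => rw [spec_thm M hM]
    simp only [← hVdef, Matrix.mul_assoc]
    rw [← Matrix.mul_assoc (star V) V, hV', Matrix.one_mul,
      ← Matrix.mul_assoc (Matrix.diagonal hM.eigenvalues) (Matrix.diagonal hM.eigenvalues),
      Matrix.diagonal_mul_diagonal]
    rfl
  set y := star V *ᵥ x with hy
  have key : (M *ᵥ x) ⬝ᵥ (M *ᵥ x) = ∑ i, (hM.eigenvalues i * hM.eigenvalues i) * (y i)^2 := by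
    rw [← dot_swap M hM, Matrix.mulVec_mulVec, ← hMsq.symm, quad_conj V _ x]
    simp [Pi.mul_apply, hy]
  have hxx : x ⬝ᵥ x = ∑ i, (y i)^2 := by
    rw [← dot_conj_self V hV x, ← hy]; simp [dotProduct, sq]
  have hle : (M *ᵥ x) ⬝ᵥ (M *ᵥ x) ≤ c^2 * (x ⬝ᵥ x) := by
    rw [key, hxx, Finset.mul_sum]
    apply Finset.sum_le_sum
    intro i _
    have h1 : hM.eigenvalues i * hM.eigenvalues i ≤ c^2 := by
      have := h i
      nlinarith [abs_nonneg (hM.eigenvalues i), sq_abs (hM.eigenvalues i)]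
    nlinarith [sq_nonneg (y i)]
  have e1 : enorm2 (M *ᵥ x) = Real.sqrt ((M *ᵥ x) ⬝ᵥ (M *ᵥ x)) := by
    simp [enorm2, dotProduct, sq]
  have e2 : enorm2 x = Real.sqrt (x ⬝ᵥ x) := by simp [enorm2, dotProduct, sq]
  rw [e1, e2]
  calc Real.sqrt ((M *ᵥ x) ⬝ᵥ (M *ᵥ x)) ≤ Real.sqrt (c^2 * (x ⬝ᵥ x)) := Real.sqrt_le_sqrt hle
    _ = c * Real.sqrt (x ⬝ᵥ x) := by
        rw [Real.sqrt_mul (sq_nonneg c), Real.sqrt_sq hc]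

lemma eig_abs_le (M : Matrix (Fin n) (Fin n) ℝ) (hM : M.IsHermitian) (c : ℝ)
    (h0 : ∀ x, 0 ≤ x ⬝ᵥ (M *ᵥ x)) (h1 : ∀ x, x ⬝ᵥ (M *ᵥ x) ≤ c * (x ⬝ᵥ x)) (j : Fin n) :
    |hM.eigenvalues j| ≤ c := by
  set v : Fin n → ℝ := ⇑(hM.eigenvectorBasis j) with hv
  have hv0 : v ≠ 0 := by
    intro h
    exact hM.eigenvectorBasis.orthonormal.ne_zero j (by ext i; exact congrFun h i)
  have hvpos : 0 < v ⬝ᵥ v := by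
    have := Matrix.dotProduct_star_self_pos_iff (R := ℝ) (v := v)
    simpa [star_trivial] using this.mpr hv0
  have hq : v ⬝ᵥ (M *ᵥ v) = hM.eigenvalues j * (v ⬝ᵥ v) := by
    rw [hv, hM.mulVec_eigenvectorBasis, dotProduct_smul]
    simp [smul_eq_mul]
  have l0 := h0 v
  have l1 := h1 v
  rw [hq] at l0 l1
  have hj0 : 0 ≤ hM.eigenvalues j := by
    by_contra hcon
    push_neg at hcon
    nlinarith
  have hjc : hM.eigenvalues j ≤ c := le_of_mul_le_mul_right (by linarith) hvpos
  rw [abs_of_nonneg hj0]; exact hjc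

lemma mulVec_inv_cancel (B : Matrix (Fin n) (Fin n) ℝ) (hB : B.PosDef) (x : Fin n → ℝ) :
    B *ᵥ (B⁻¹ *ᵥ x) = x := by
  rw [Matrix.mulVec_mulVec, Matrix.mul_nonsing_inv _ hB.det_pos.ne'.isUnit, Matrix.one_mulVec]

lemma inv_quad_le (B C : Matrix (Fin n) (Fin n) ℝ) (hB : B.PosDef) (hC : C.PosDef)
    (h : ∀ x, x ⬝ᵥ (B *ᵥ x) ≤ x ⬝ᵥ (C *ᵥ x)) (x : Fin n → ℝ) :
    x ⬝ᵥ (C⁻¹ *ᵥ x) ≤ x ⬝ᵥ (B⁻¹ *ᵥ x) := by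
  set y := C⁻¹ *ᵥ x with hy
  set w := B⁻¹ *ᵥ x with hw
  have hCy : C *ᵥ y = x := mulVec_inv_cancel C hC x
  have hBw : B *ᵥ w = x := mulVec_inv_cancel B hB x
  have hz : 0 ≤ (y - w) ⬝ᵥ (B *ᵥ (y - w)) := by
    have := hB.posSemidef.dotProduct_mulVec_nonneg (y - w)
    simpa using this
  have e1 : y ⬝ᵥ (C *ᵥ y) = x ⬝ᵥ y := by rw [hCy, dotProduct_comm]
  have e2 : y ⬝ᵥ (B *ᵥ w) = y ⬝ᵥ x := by rw [hBw]
  have e3 : w ⬝ᵥ (B *ᵥ y) = x ⬝ᵥ y := by rw [dot_swap B hB.1, hBw]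
  have e4 : w ⬝ᵥ (B *ᵥ w) = w ⬝ᵥ x := by rw [hBw]
  have e5 : (y - w) ⬝ᵥ (B *ᵥ (y - w)) =
      y ⬝ᵥ (B *ᵥ y) - y ⬝ᵥ (B *ᵥ w) - w ⬝ᵥ (B *ᵥ y) + w ⬝ᵥ (B *ᵥ w) := by
    rw [Matrix.mulVec_sub, sub_dotProduct, dotProduct_sub, dotProduct_sub]
    ring
  have hyx : y ⬝ᵥ x = x ⬝ᵥ y := dotProduct_comm _ _
  have hwx : w ⬝ᵥ x = x ⬝ᵥ w := dotProduct_comm _ _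
  have hby := h y
  rw [e5, e2, e3, e4] at hz
  rw [e1] at hby
  linarith

lemma smul_one_diag (a : ℝ) : a • (1 : Matrix (Fin n) (Fin n) ℝ) =
    Matrix.diagonal (fun _ => a) := by
  ext i j
  rcases eq_or_ne i j with h | h <;> simp [Matrix.diagonal_apply, Matrix.one_apply, h]

lemma conj_inv (Q : Matrix (Fin n) (Fin n) ℝ) (V : Matrix (Fin n) (Fin n) ℝ)
    (hV : V * star V = 1) (hV' : star V * V = 1) (d : Fin n → ℝ) (hd : ∀ i, d i ≠ 0)
    (hQ : Q = V * Matrix.diagonal d * star V) :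
    Q⁻¹ = V * Matrix.diagonal (fun i => (d i)⁻¹) * star V := by
  apply Matrix.inv_eq_right_inv
  rw [hQ]
  simp only [Matrix.mul_assoc]
  rw [← Matrix.mul_assoc (star V) V, hV', Matrix.one_mul,
    ← Matrix.mul_assoc (Matrix.diagonal d) (Matrix.diagonal _), Matrix.diagonal_mul_diagonal]
  have : (fun i => d i * (d i)⁻¹) = fun _ => (1:ℝ) := by
    funext i; simp [mul_inv_cancel₀ (hd i)]
  rw [this]
  rw [show Matrix.diagonal (fun _ => (1:ℝ)) = (1 : Matrix (Fin n) (Fin n) ℝ) from Matrix.diagonal_one]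
  rw [Matrix.one_mul, hV]

-- the quadratic form of Q⁻¹ - (Q + a•1)⁻¹ is bounded
lemma quadN_le (Q : Matrix (Fin n) (Fin n) ℝ) (hQ : Q.PosDef) (a m : ℝ) (ha : 0 < a)
    (hm : 0 < m) (hmle : ∀ i, m ≤ hQ.1.eigenvalues i) (x : Fin n → ℝ) :
    x ⬝ᵥ (Q⁻¹ *ᵥ x) - x ⬝ᵥ ((Q + a • 1)⁻¹ *ᵥ x) ≤ (m⁻¹ - (m + a)⁻¹) * (x ⬝ᵥ x) := by
  set V := (hQ.1.eigenvectorUnitary : Matrix (Fin n) (Fin n) ℝ) with hVdef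
  have hV : V * star V = 1 := (Matrix.mem_unitaryGroup_iff).mp hQ.1.eigenvectorUnitary.2
  have hV' : star V * V = 1 := (Matrix.mem_unitaryGroup_iff').mp hQ.1.eigenvectorUnitary.2
  set lam := hQ.1.eigenvalues with hlam
  have hlampos : ∀ i, 0 < lam i := fun i => hQ.eigenvalues_pos i
  have hrepr : Q = V * Matrix.diagonal lam * star V := spec_thm Q hQ.1
  have hrepr2 : Q + a • 1 = V * Matrix.diagonal (fun i => lam i + a) * star V := by
    have h1 : a • (1 : Matrix (Fin n) (Fin n) ℝ) = V * Matrix.diagonal (fun _ => a) * star V := by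
      rw [smul_one_diag]
      have : Matrix.diagonal (fun _ : Fin n => a) = a • (1 : Matrix (Fin n) (Fin n) ℝ) :=
        (smul_one_diag a).symm
      rw [this, Matrix.mul_smul, Matrix.smul_mul, Matrix.mul_one, hV, smul_one_diag]
    rw [hrepr, h1, ← Matrix.add_mul, ← Matrix.mul_add, Matrix.diagonal_add]
  have hinv1 : Q⁻¹ = V * Matrix.diagonal (fun i => (lam i)⁻¹) * star V :=
    conj_inv Q V hV hV' lam (fun i => (hlampos i).ne') hrepr
  have hinv2 : (Q + a • 1)⁻¹ = V * Matrix.diagonal (fun i => (lam i + a)⁻¹) * star V :=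
    conj_inv _ V hV hV' _ (fun i => (add_pos (hlampos i) ha).ne') hrepr2
  set y := star V *ᵥ x with hy
  have q1 : x ⬝ᵥ (Q⁻¹ *ᵥ x) = ∑ i, (lam i)⁻¹ * (y i)^2 := by
    rw [hinv1, quad_conj]
  have q2 : x ⬝ᵥ ((Q + a • 1)⁻¹ *ᵥ x) = ∑ i, (lam i + a)⁻¹ * (y i)^2 := by
    rw [hinv2, quad_conj]
  have hxx : x ⬝ᵥ x = ∑ i, (y i)^2 := by
    rw [← dot_conj_self V hV x, ← hy]; simp [dotProduct, sq]
  rw [q1, q2, hxx, ← Finset.sum_sub_distrib, Finset.mul_sum]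
  apply Finset.sum_le_sum
  intro i _
  have hterm : (lam i)⁻¹ - (lam i + a)⁻¹ ≤ m⁻¹ - (m + a)⁻¹ := by
    have hli : 0 < lam i := hlampos i
    have e1 : (lam i)⁻¹ - (lam i + a)⁻¹ = a / (lam i * (lam i + a)) := by
      field_simp
      ring
    have e2 : m⁻¹ - (m + a)⁻¹ = a / (m * (m + a)) := by field_simp; ring
    rw [e1, e2]
    apply div_le_div_of_nonneg_left ha.le (by positivity)
    have := hmle i
    nlinarith
  nlinarith [sq_nonneg (y i), hterm]

lemma norm_euclidean (v : EuclideanSpace ℝ (Fin n)) : ‖v‖ = enorm2 (⇑v) := by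
  rw [EuclideanSpace.norm_eq]
  simp [enorm2, sq_abs]

lemma enorm2_smul (t : ℝ) (v : Fin n → ℝ) : enorm2 (t • v) = |t| * enorm2 v := by
  simp only [enorm2, Pi.smul_apply, smul_eq_mul, mul_pow]
  rw [← Finset.mul_sum, Real.sqrt_mul (sq_nonneg t), Real.sqrt_sq_eq_abs]

lemma spec_eq_maxEig [NeZero n] (Q : Matrix (Fin n) (Fin n) ℝ) (hQ : Q.PosDef) :
    spec Q = maxEig hQ.1 := by
  haveI : Nonempty (Fin n) := ⟨⟨0, Nat.pos_of_ne_zero (NeZero.ne n)⟩⟩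
  have bdd : BddAbove (Set.range hQ.1.eigenvalues) := (Set.finite_range _).bddAbove
  have le_max : ∀ i, hQ.1.eigenvalues i ≤ maxEig hQ.1 := fun i => le_ciSup bdd i
  have hmax0 : 0 ≤ maxEig hQ.1 :=
    le_trans (hQ.eigenvalues_pos (Classical.arbitrary _)).le (le_max _)
  apply le_antisymm
  · apply ContinuousLinearMap.opNorm_le_bound _ hmax0
    intro v
    have h1 : (LinearMap.toContinuousLinearMap (Matrix.toEuclideanLin Q)) v =
        (WithLp.equiv 2 (Fin n → ℝ)).symm (Q *ᵥ (WithLp.equiv 2 (Fin n → ℝ)) v) := rfl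
    rw [h1]
    have h2 : ‖(WithLp.equiv 2 (Fin n → ℝ)).symm (Q *ᵥ (WithLp.equiv 2 (Fin n → ℝ)) v)‖
        = enorm2 (Q *ᵥ (WithLp.equiv 2 (Fin n → ℝ)) v) := norm_euclidean _
    have h3 : ‖v‖ = enorm2 ((WithLp.equiv 2 (Fin n → ℝ)) v) := norm_euclidean v
    rw [h2, h3]
    exact norm_mulVec_le Q hQ.1 _ hmax0
      (fun j => by rw [abs_of_pos (hQ.eigenvalues_pos j)]; exact le_max j) _
  · apply ciSup_le
    intro j
    set v : EuclideanSpace ℝ (Fin n) := hQ.1.eigenvectorBasis j with hv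
    have hv1 : ‖v‖ = 1 := hQ.1.eigenvectorBasis.orthonormal.1 j
    have hTv : (LinearMap.toContinuousLinearMap (Matrix.toEuclideanLin Q)) v =
        (WithLp.equiv 2 (Fin n → ℝ)).symm (Q *ᵥ ⇑v) := rfl
    have := (LinearMap.toContinuousLinearMap (Matrix.toEuclideanLin Q)).le_opNorm v
    rw [hTv, hv1, mul_one] at this
    have h4 : ‖(WithLp.equiv 2 (Fin n → ℝ)).symm (Q *ᵥ ⇑v)‖ = enorm2 (Q *ᵥ ⇑v) :=
      norm_euclidean _
    rw [h4] at this
    have h5 : Q *ᵥ ⇑v = hQ.1.eigenvalues j • ⇑v := hQ.1.mulVec_eigenvectorBasis j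
    rw [h5, enorm2_smul, abs_of_pos (hQ.eigenvalues_pos j)] at this
    have h6 : enorm2 (⇑v) = 1 := by rw [← norm_euclidean, hv1]
    rw [h6, mul_one] at this
    exact this

end Stmt9Aux

open Stmt9Aux in
theorem stmt9 [NeZero n] (Q A : Matrix (Fin n) (Fin n) ℝ) (hQ : Q.PosDef)
    (α : Fin n → ℝ) (hA : A = Matrix.diagonal α) (hαpos : ∀ i, 0 < α i)
    (r : Fin n → ℝ)
    (kQ αmax : ℝ) (hkQ : kQ = maxEig hQ.1 / minEig hQ.1) (hαmax : αmax = ⨆ i, α i) :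
    enorm2 (-(Q⁻¹ *ᵥ r) - -((Q + A)⁻¹ *ᵥ r)) ≤
      enorm2 r * kQ ^ 2 * αmax / (spec Q ^ 2 + spec Q * kQ * αmax) := by
  haveI : Nonempty (Fin n) := ⟨⟨0, Nat.pos_of_ne_zero (NeZero.ne n)⟩⟩
  -- eigenvalue facts
  set lam := hQ.1.eigenvalues with hlam
  have hlampos : ∀ i, 0 < lam i := fun i => hQ.eigenvalues_pos i
  set m := minEig hQ.1 with hm_def
  set Mx := maxEig hQ.1 with hMx_def
  have hmin_le : ∀ i, m ≤ lam i := fun i => ciInf_le (Set.finite_range _).bddBelow i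
  have le_max : ∀ i, lam i ≤ Mx := fun i => le_ciSup (Set.finite_range _).bddAbove i
  obtain ⟨i0, hi0⟩ := Finite.exists_min lam
  have hm_pos : 0 < m := lt_of_lt_of_le (hlampos i0) (le_ciInf hi0)
  have hMx_pos : 0 < Mx := lt_of_lt_of_le hm_pos (le_trans (hmin_le i0) (le_max i0))
  have hm_le_Mx : m ≤ Mx := le_trans (hmin_le i0) (le_max i0)
  -- alpha facts
  set a := αmax with ha_def
  have hα_le : ∀ i, α i ≤ a := by
    intro i; rw [hαmax]; exact le_ciSup (Set.finite_range _).bddAbove i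
  have ha_pos : 0 < a := lt_of_lt_of_le (hαpos i0) (hα_le i0)
  -- positive definiteness
  have hApsd : A.PosSemidef := by
    rw [hA]; exact Matrix.PosSemidef.diagonal (fun i => (hαpos i).le)
  have hQA : (Q + A).PosDef := hQ.add_posSemidef hApsd
  have hQa : (Q + a • 1).PosDef := by
    apply hQ.add_posSemidef
    rw [smul_one_diag]
    exact Matrix.PosSemidef.diagonal (fun i => ha_pos.le)
  -- quadratic form comparisons
  have qA_nonneg : ∀ x : Fin n → ℝ, 0 ≤ x ⬝ᵥ (A *ᵥ x) := fun x => by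
    simpa using hApsd.dotProduct_mulVec_nonneg x
  have qQ_le_QA : ∀ x : Fin n → ℝ, x ⬝ᵥ (Q *ᵥ x) ≤ x ⬝ᵥ ((Q + A) *ᵥ x) := by
    intro x
    rw [Matrix.add_mulVec, dotProduct_add]
    have := qA_nonneg x
    linarith
  have qQA_le_Qa : ∀ x : Fin n → ℝ, x ⬝ᵥ ((Q + A) *ᵥ x) ≤ x ⬝ᵥ ((Q + a • 1) *ᵥ x) := by
    intro x
    rw [Matrix.add_mulVec, dotProduct_add, Matrix.add_mulVec, dotProduct_add]
    have h1 : x ⬝ᵥ (A *ᵥ x) ≤ x ⬝ᵥ ((a • (1 : Matrix (Fin n) (Fin n) ℝ)) *ᵥ x) := by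
      rw [hA, smul_one_diag]
      simp only [dotProduct, Matrix.mulVec_diagonal]
      apply Finset.sum_le_sum
      intro i _
      have := hα_le i
      nlinarith [sq_nonneg (x i)]
    linarith
  -- the error matrix
  set M : Matrix (Fin n) (Fin n) ℝ := Q⁻¹ - (Q + A)⁻¹ with hM_def
  have hMherm : M.IsHermitian := (Matrix.IsHermitian.inv hQ.1).sub (Matrix.IsHermitian.inv hQA.1)
  set c : ℝ := m⁻¹ - (m + a)⁻¹ with hc_def
  have hc0 : 0 ≤ c := by
    rw [hc_def, sub_nonneg]
    apply inv_anti₀ hm_pos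
    linarith
  have hlow : ∀ x : Fin n → ℝ, 0 ≤ x ⬝ᵥ (M *ᵥ x) := by
    intro x
    rw [hM_def, Matrix.sub_mulVec, dotProduct_sub, sub_nonneg]
    exact inv_quad_le Q (Q + A) hQ hQA qQ_le_QA x
  have hup : ∀ x : Fin n → ℝ, x ⬝ᵥ (M *ᵥ x) ≤ c * (x ⬝ᵥ x) := by
    intro x
    rw [hM_def, Matrix.sub_mulVec, dotProduct_sub]
    have h1 : x ⬝ᵥ ((Q + a • 1)⁻¹ *ᵥ x) ≤ x ⬝ᵥ ((Q + A)⁻¹ *ᵥ x) :=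
      inv_quad_le (Q + A) (Q + a • 1) hQA hQa qQA_le_Qa x
    have h2 := quadN_le Q hQ a m ha_pos hm_pos hmin_le x
    rw [hc_def]
    linarith
  -- the left-hand side
  have hLHS : (-(Q⁻¹ *ᵥ r) - -((Q + A)⁻¹ *ᵥ r)) = -(M *ᵥ r) := by
    rw [hM_def, Matrix.sub_mulVec]
    abel
  have hneg : enorm2 (-(M *ᵥ r)) = enorm2 (M *ᵥ r) := by
    simp [enorm2, neg_sq]
  have hbound : enorm2 (M *ᵥ r) ≤ c * enorm2 r :=
    norm_mulVec_le M hMherm c hc0 (eig_abs_le M hMherm c hlow hup) r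
  rw [hLHS, hneg]
  refine le_trans hbound ?_
  -- final arithmetic
  have hspec : spec Q = Mx := spec_eq_maxEig Q hQ
  have hceq : c = kQ ^ 2 * a / (Mx ^ 2 + Mx * kQ * a) := by
    rw [hc_def, hkQ]
    have h1 : m ≠ 0 := hm_pos.ne'
    have h2 : Mx ≠ 0 := hMx_pos.ne'
    have h3 : m + a ≠ 0 := by positivity
    field_simp
    ring
  rw [hspec, hceq]
  exact le_of_eq (by ring)
end

section
/- Let Q and A be n×n real symmetric positive definite matrices and r ∈ ℝⁿ. Then ‖Q⁻¹r − (Q + A)⁻¹r‖₂ ≤ ‖r‖₂ / λ_n(QA⁻¹Q + Q), where λ_n denotes the smallest eigenvalue. -/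
open Matrix Filter Topology

variable {n : ℕ}

lemma enorm2_nonneg (v : Fin n → ℝ) : 0 ≤ enorm2 v := Real.sqrt_nonneg _

lemma sum_sq_eq_dot (v : Fin n → ℝ) : ∑ i, v i ^ 2 = v ⬝ᵥ v := by
  simp [dotProduct, pow_two]

lemma enorm2_mulVec_unitary {U : Matrix (Fin n) (Fin n) ℝ}
    (hU : U ∈ Matrix.unitaryGroup (Fin n) ℝ) (z : Fin n → ℝ) :
    enorm2 (U *ᵥ z) = enorm2 z := by
  unfold enorm2
  congr 1
  rw [sum_sq_eq_dot, sum_sq_eq_dot]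
  have hsU : star U * U = 1 := (Unitary.mem_iff.mp hU).1
  calc (U *ᵥ z) ⬝ᵥ (U *ᵥ z) = ((U *ᵥ z) ᵥ* U) ⬝ᵥ z := by rw [dotProduct_mulVec]
    _ = (Uᵀ *ᵥ (U *ᵥ z)) ⬝ᵥ z := by rw [mulVec_transpose]
    _ = ((Uᵀ * U) *ᵥ z) ⬝ᵥ z := by rw [mulVec_mulVec]
    _ = z ⬝ᵥ z := by
        have : Uᵀ * U = 1 := by
          simpa [Matrix.star_eq_conjTranspose, Matrix.conjTranspose_eq_transpose_of_trivial] using hsU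
        rw [this, one_mulVec]

lemma minEig_mul_enorm2_le {M : Matrix (Fin n) (Fin n) ℝ} (hMpd : M.PosDef)
    (x : Fin n → ℝ) :
    minEig hMpd.1 * enorm2 x ≤ enorm2 (M *ᵥ x) := by
  rcases isEmpty_or_nonempty (Fin n) with h | h
  · have hx : enorm2 x = 0 := by simp [enorm2, Finset.univ_eq_empty]
    rw [hx, mul_zero]
    exact enorm2_nonneg _
  have hH := hMpd.1
  set U : Matrix (Fin n) (Fin n) ℝ := (hH.eigenvectorUnitary : Matrix (Fin n) (Fin n) ℝ)
    with hUdef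
  have hU : U ∈ Matrix.unitaryGroup (Fin n) ℝ := hH.eigenvectorUnitary.2
  have hUstar : star U ∈ Matrix.unitaryGroup (Fin n) ℝ := Unitary.star_mem hU
  set y : Fin n → ℝ := star U *ᵥ x with hydef
  have hx : U *ᵥ y = x := by
    rw [hydef, mulVec_mulVec, (Unitary.mem_iff.mp hU).2, one_mulVec]
  have hxy : enorm2 x = enorm2 y := by
    rw [← hx, enorm2_mulVec_unitary hU]
  have hDy : diagonal (RCLike.ofReal ∘ hH.eigenvalues) *ᵥ y
      = fun i => hH.eigenvalues i * y i := by
    funext i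
    rw [mulVec_diagonal]
    simp
  have hMx : M *ᵥ x = U *ᵥ (fun i => hH.eigenvalues i * y i) := by
    conv_lhs => rw [hH.spectral_theorem, Unitary.conjStarAlgAut_apply]
    rw [Matrix.mul_assoc, ← mulVec_mulVec, ← mulVec_mulVec, ← hydef, hDy]
  have hb : BddBelow (Set.range hH.eigenvalues) := (Set.finite_range _).bddBelow
  have hle : ∀ i, minEig hMpd.1 ≤ hH.eigenvalues i := fun i => ciInf_le hb i
  have h0 : 0 ≤ minEig hMpd.1 :=
    le_ciInf fun i => (hMpd.eigenvalues_pos i).le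
  rw [hMx, enorm2_mulVec_unitary hU, hxy]
  unfold enorm2
  have hsum : (minEig hMpd.1) ^ 2 * ∑ i, y i ^ 2 ≤ ∑ i, (hH.eigenvalues i * y i) ^ 2 := by
    rw [Finset.mul_sum]
    refine Finset.sum_le_sum fun i _ => ?_
    rw [mul_pow]
    exact mul_le_mul_of_nonneg_right (pow_le_pow_left₀ h0 (hle i) 2) (sq_nonneg _)
  calc minEig hMpd.1 * Real.sqrt (∑ i, y i ^ 2)
      = Real.sqrt ((minEig hMpd.1) ^ 2 * ∑ i, y i ^ 2) := by
        rw [Real.sqrt_mul (sq_nonneg _), Real.sqrt_sq h0]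
    _ ≤ Real.sqrt (∑ i, (hH.eigenvalues i * y i) ^ 2) := Real.sqrt_le_sqrt hsum

theorem stmt10 (Q A : Matrix (Fin n) (Fin n) ℝ) (hQ : Q.PosDef) (hA : A.PosDef)
    (hM : (Q * A⁻¹ * Q + Q).IsHermitian) (r : Fin n → ℝ) :
    enorm2 (Q⁻¹ *ᵥ r - (Q + A)⁻¹ *ᵥ r) ≤ enorm2 r / minEig hM := by
  rcases isEmpty_or_nonempty (Fin n) with h | h
  · simp [enorm2, Finset.univ_eq_empty, Real.sqrt_zero, zero_div, Pi.sub_apply]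
  have hQA : (Q + A).PosDef := hQ.add hA
  have hQAQ : (Q * A⁻¹ * Q).PosSemidef := by
    have := hA.inv.posSemidef.conjTranspose_mul_mul_same Q
    rwa [hQ.isHermitian.eq] at this
  have hMpd : (Q * A⁻¹ * Q + Q).PosDef := Matrix.PosDef.posSemidef_add hQAQ hQ
  have hAdet : IsUnit A.det := hA.det_pos.ne'.isUnit
  have hQdet : IsUnit Q.det := hQ.det_pos.ne'.isUnit
  have hQAdet : IsUnit (Q + A).det := hQA.det_pos.ne'.isUnit
  have hMdet : IsUnit (Q * A⁻¹ * Q + Q).det := hMpd.det_pos.ne'.isUnit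
  -- the key matrix identity
  have hfact : Q * A⁻¹ * Q + Q = Q * A⁻¹ * (Q + A) := by
    rw [mul_add, Matrix.mul_assoc Q A⁻¹ A, Matrix.nonsing_inv_mul A hAdet, Matrix.mul_one]
  have hid : Q⁻¹ - (Q + A)⁻¹ = (Q * A⁻¹ * Q + Q)⁻¹ := by
    have h1 : (Q + A) * (Q⁻¹ - (Q + A)⁻¹) = A * Q⁻¹ := by
      rw [Matrix.mul_sub, Matrix.add_mul, Matrix.mul_nonsing_inv Q hQdet,
        Matrix.mul_nonsing_inv (Q + A) hQAdet]
      abel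
    have h2 : (Q * A⁻¹ * (Q + A))⁻¹ = (Q + A)⁻¹ * (A * Q⁻¹) := by
      rw [Matrix.mul_inv_rev, Matrix.mul_inv_rev, Matrix.nonsing_inv_nonsing_inv A hAdet]
    have h3 : Q⁻¹ - (Q + A)⁻¹ = (Q + A)⁻¹ * (A * Q⁻¹) := by
      calc Q⁻¹ - (Q + A)⁻¹ = 1 * (Q⁻¹ - (Q + A)⁻¹) := (Matrix.one_mul _).symm
        _ = ((Q + A)⁻¹ * (Q + A)) * (Q⁻¹ - (Q + A)⁻¹) := by
            rw [Matrix.nonsing_inv_mul _ hQAdet]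
        _ = (Q + A)⁻¹ * ((Q + A) * (Q⁻¹ - (Q + A)⁻¹)) := Matrix.mul_assoc _ _ _
        _ = (Q + A)⁻¹ * (A * Q⁻¹) := by rw [h1]
    rw [hfact, h2, h3]
  have hvec : Q⁻¹ *ᵥ r - (Q + A)⁻¹ *ᵥ r = (Q * A⁻¹ * Q + Q)⁻¹ *ᵥ r := by
    rw [← sub_mulVec, hid]
  rw [hvec]
  set x := (Q * A⁻¹ * Q + Q)⁻¹ *ᵥ r with hxdef
  have hrx : (Q * A⁻¹ * Q + Q) *ᵥ x = r := by
    rw [hxdef, mulVec_mulVec, Matrix.mul_nonsing_inv _ hMdet, one_mulVec]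
  have hmain := minEig_mul_enorm2_le hMpd x
  rw [hrx] at hmain
  -- positivity of the smallest eigenvalue
  have hpos : 0 < minEig hM := by
    obtain ⟨i₀, hi₀⟩ := Finite.exists_min hM.eigenvalues
    calc (0:ℝ) < hM.eigenvalues i₀ := hMpd.eigenvalues_pos i₀
      _ ≤ ⨅ i, hM.eigenvalues i := le_ciInf hi₀
  rw [le_div_iff₀ hpos]
  calc enorm2 x * minEig hM = minEig hM * enorm2 x := mul_comm _ _
    _ ≤ enorm2 r := hmain
end

section
/- Let Q be an n×n real symmetric positive definite matrix with spectral condition number k_Q, let r ∈ ℝⁿ, let ε satisfy 0 < ε < ‖r‖₂ k_Q / ‖Q‖₂, and let k_D > 0 be a desired condition number. Let A be a diagonal n×n matrix with positive diagonal entries whose largest entry satisfies α_max < ε ‖Q‖₂² / (‖r‖₂ k_Q² − ε ‖Q‖₂ k_Q) and whose smallest entry satisfies α_min > ‖Q‖₂ (k_D⁻¹ − k_Q⁻¹) + ε ‖Q‖₂² / (k_Q k_D (‖r‖₂ k_Q − ε ‖Q‖₂)). Then the spectral condition number of Q + A satisfies k_{Q+A} < k_D. -/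
open Matrix Filter Topology

variable {n : ℕ}

open scoped RealInnerProductSpace

section AuxLemmas

lemma stmt15aux_eigTapply {M : Matrix (Fin n) (Fin n) ℝ} (hM : M.IsHermitian) (j : Fin n) :
    Matrix.toEuclideanLin M (hM.eigenvectorBasis j)
      = hM.eigenvalues j • hM.eigenvectorBasis j := by
  have h := hM.mulVec_eigenvectorBasis j
  rw [Matrix.toEuclideanLin_apply]
  ext i
  rw [h]
  rfl

lemma stmt15aux_reprT {M : Matrix (Fin n) (Fin n) ℝ} (hM : M.IsHermitian)
    (v : EuclideanSpace ℝ (Fin n)) (j : Fin n) :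
    hM.eigenvectorBasis.repr (Matrix.toEuclideanLin M v) j
      = hM.eigenvalues j * hM.eigenvectorBasis.repr v j := by
  have hsym : (Matrix.toEuclideanLin M).IsSymmetric :=
    Matrix.isHermitian_iff_isSymmetric.mp hM
  rw [OrthonormalBasis.repr_apply_apply, OrthonormalBasis.repr_apply_apply,
    ← hsym (hM.eigenvectorBasis j) v, stmt15aux_eigTapply hM j, real_inner_smul_left]

lemma stmt15aux_normsq (b : OrthonormalBasis (Fin n) ℝ (EuclideanSpace ℝ (Fin n)))
    (v : EuclideanSpace ℝ (Fin n)) : ‖v‖ ^ 2 = ∑ j, (b.repr v j) ^ 2 := by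
  have h := b.repr.inner_map_map v v
  rw [← real_inner_self_eq_norm_sq, ← h, PiLp.inner_apply]
  simp [RCLike.inner_apply, sq]

lemma stmt15aux_innerT {M : Matrix (Fin n) (Fin n) ℝ} (hM : M.IsHermitian)
    (v : EuclideanSpace ℝ (Fin n)) :
    ⟪v, Matrix.toEuclideanLin M v⟫ =
      ∑ j, hM.eigenvalues j * (hM.eigenvectorBasis.repr v j) ^ 2 := by
  rw [← hM.eigenvectorBasis.repr.inner_map_map v (Matrix.toEuclideanLin M v)]
  simp only [PiLp.inner_apply, RCLike.inner_apply, starRingEnd_apply, star_trivial,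
    stmt15aux_reprT hM]
  exact Finset.sum_congr rfl fun j _ => by ring

lemma stmt15aux_innerT_le {M : Matrix (Fin n) (Fin n) ℝ} (hM : M.IsHermitian)
    (v : EuclideanSpace ℝ (Fin n)) :
    ⟪v, Matrix.toEuclideanLin M v⟫ ≤ maxEig hM * ‖v‖ ^ 2 := by
  rw [stmt15aux_innerT hM v, stmt15aux_normsq hM.eigenvectorBasis v, Finset.mul_sum]
  refine Finset.sum_le_sum fun j _ => ?_
  exact mul_le_mul_of_nonneg_right
    (le_ciSup (Set.finite_range _).bddAbove j) (sq_nonneg _)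

lemma stmt15aux_le_innerT {M : Matrix (Fin n) (Fin n) ℝ} (hM : M.IsHermitian)
    (v : EuclideanSpace ℝ (Fin n)) :
    minEig hM * ‖v‖ ^ 2 ≤ ⟪v, Matrix.toEuclideanLin M v⟫ := by
  rw [stmt15aux_innerT hM v, stmt15aux_normsq hM.eigenvectorBasis v, Finset.mul_sum]
  refine Finset.sum_le_sum fun j _ => ?_
  exact mul_le_mul_of_nonneg_right
    (ciInf_le (Set.finite_range _).bddBelow j) (sq_nonneg _)

variable [NeZero n]

lemma stmt15aux_nonemptyFin : Nonempty (Fin n) :=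
  Fin.pos_iff_nonempty.mp (Nat.pos_of_ne_zero (NeZero.ne n))

lemma stmt15aux_exists_unit_max {M : Matrix (Fin n) (Fin n) ℝ} (hM : M.IsHermitian) :
    ∃ v : EuclideanSpace ℝ (Fin n), ‖v‖ = 1 ∧
      ⟪v, Matrix.toEuclideanLin M v⟫ = maxEig hM := by
  haveI := stmt15aux_nonemptyFin (n := n)
  obtain ⟨j₀, hj₀⟩ := Finite.exists_max hM.eigenvalues
  have hb1 : ‖hM.eigenvectorBasis j₀‖ = 1 := hM.eigenvectorBasis.orthonormal.1 j₀
  have hmax : maxEig hM = hM.eigenvalues j₀ :=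
    le_antisymm (ciSup_le hj₀) (le_ciSup (Set.finite_range _).bddAbove j₀)
  refine ⟨hM.eigenvectorBasis j₀, hb1, ?_⟩
  rw [stmt15aux_eigTapply hM j₀, real_inner_smul_right, real_inner_self_eq_norm_sq, hb1, hmax]
  ring

lemma stmt15aux_exists_unit_min {M : Matrix (Fin n) (Fin n) ℝ} (hM : M.IsHermitian) :
    ∃ v : EuclideanSpace ℝ (Fin n), ‖v‖ = 1 ∧
      ⟪v, Matrix.toEuclideanLin M v⟫ = minEig hM := by
  haveI := stmt15aux_nonemptyFin (n := n)
  obtain ⟨j₀, hj₀⟩ := Finite.exists_min hM.eigenvalues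
  have hb1 : ‖hM.eigenvectorBasis j₀‖ = 1 := hM.eigenvectorBasis.orthonormal.1 j₀
  have hmin : minEig hM = hM.eigenvalues j₀ :=
    le_antisymm (ciInf_le (Set.finite_range _).bddBelow j₀) (le_ciInf hj₀)
  refine ⟨hM.eigenvectorBasis j₀, hb1, ?_⟩
  rw [stmt15aux_eigTapply hM j₀, real_inner_smul_right, real_inner_self_eq_norm_sq, hb1, hmin]
  ring

lemma stmt15aux_minEig_pos {Q : Matrix (Fin n) (Fin n) ℝ} (hQ : Q.PosDef) :
    0 < minEig hQ.1 := by
  haveI := stmt15aux_nonemptyFin (n := n)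
  obtain ⟨j₀, hj₀⟩ := Finite.exists_min hQ.1.eigenvalues
  have : minEig hQ.1 = hQ.1.eigenvalues j₀ :=
    le_antisymm (ciInf_le (Set.finite_range _).bddBelow j₀) (le_ciInf hj₀)
  rw [this]
  exact hQ.eigenvalues_pos j₀

lemma stmt15aux_min_le_max {M : Matrix (Fin n) (Fin n) ℝ} (hM : M.IsHermitian) :
    minEig hM ≤ maxEig hM := by
  haveI := stmt15aux_nonemptyFin (n := n)
  inhabit (Fin n)
  exact le_trans (ciInf_le (Set.finite_range _).bddBelow default)
    (le_ciSup (Set.finite_range _).bddAbove default)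

lemma stmt15aux_spec_eq_maxEig {Q : Matrix (Fin n) (Fin n) ℝ} (hQ : Q.PosDef) :
    spec Q = maxEig hQ.1 := by
  have hmaxpos : 0 < maxEig hQ.1 := lt_of_lt_of_le (stmt15aux_minEig_pos hQ)
    (stmt15aux_min_le_max hQ.1)
  refine le_antisymm ?_ ?_
  · apply ContinuousLinearMap.opNorm_le_bound _ hmaxpos.le
    intro v
    have hTv : ‖(LinearMap.toContinuousLinearMap (Matrix.toEuclideanLin Q)) v‖ ^ 2
        = ∑ j, (hQ.1.eigenvalues j * hQ.1.eigenvectorBasis.repr v j) ^ 2 := by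
      rw [show ((LinearMap.toContinuousLinearMap (Matrix.toEuclideanLin Q)) v)
        = Matrix.toEuclideanLin Q v from rfl,
        stmt15aux_normsq hQ.1.eigenvectorBasis (Matrix.toEuclideanLin Q v)]
      exact Finset.sum_congr rfl fun j _ => by rw [stmt15aux_reprT hQ.1]
    have hsq : ‖(LinearMap.toContinuousLinearMap (Matrix.toEuclideanLin Q)) v‖ ^ 2
        ≤ (maxEig hQ.1 * ‖v‖) ^ 2 := by
      rw [hTv, mul_pow, stmt15aux_normsq hQ.1.eigenvectorBasis v, Finset.mul_sum]
      refine Finset.sum_le_sum fun j _ => ?_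
      rw [mul_pow]
      refine mul_le_mul_of_nonneg_right ?_ (sq_nonneg _)
      have h1 : hQ.1.eigenvalues j ≤ maxEig hQ.1 := le_ciSup (Set.finite_range _).bddAbove j
      have h2 : 0 < hQ.1.eigenvalues j := hQ.eigenvalues_pos j
      nlinarith
    exact (pow_le_pow_iff_left₀ (norm_nonneg _) (by positivity) two_ne_zero).mp hsq
  · obtain ⟨v, hv1, hvT⟩ := stmt15aux_exists_unit_max hQ.1
    calc maxEig hQ.1 = ⟪v, Matrix.toEuclideanLin Q v⟫ := hvT.symm
      _ ≤ ‖v‖ * ‖Matrix.toEuclideanLin Q v‖ := real_inner_le_norm _ _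
      _ = ‖(LinearMap.toContinuousLinearMap (Matrix.toEuclideanLin Q)) v‖ := by
          rw [hv1, one_mul]; rfl
      _ ≤ spec Q * ‖v‖ := ContinuousLinearMap.le_opNorm _ v
      _ = spec Q := by rw [hv1, mul_one]

lemma stmt15aux_diag_le (α : Fin n → ℝ) (v : EuclideanSpace ℝ (Fin n)) :
    ⟪v, Matrix.toEuclideanLin (Matrix.diagonal α) v⟫ ≤ (⨆ i, α i) * ‖v‖ ^ 2 := by
  rw [PiLp.inner_apply, ← real_inner_self_eq_norm_sq, PiLp.inner_apply, Finset.mul_sum]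
  refine Finset.sum_le_sum fun i _ => ?_
  simp only [RCLike.inner_apply, starRingEnd_apply, star_trivial,
    Matrix.toEuclideanLin_apply, PiLp.toLp_apply,
    Matrix.mulVec_diagonal]
  have h1 : α i ≤ ⨆ i, α i := le_ciSup (Set.finite_range _).bddAbove i
  nlinarith [sq_nonneg (v i)]

lemma stmt15aux_le_diag (α : Fin n → ℝ) (v : EuclideanSpace ℝ (Fin n)) :
    (⨅ i, α i) * ‖v‖ ^ 2 ≤ ⟪v, Matrix.toEuclideanLin (Matrix.diagonal α) v⟫ := by
  rw [PiLp.inner_apply, ← real_inner_self_eq_norm_sq, PiLp.inner_apply, Finset.mul_sum]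
  refine Finset.sum_le_sum fun i _ => ?_
  simp only [RCLike.inner_apply, starRingEnd_apply, star_trivial,
    Matrix.toEuclideanLin_apply, PiLp.toLp_apply,
    Matrix.mulVec_diagonal]
  have h1 : (⨅ i, α i) ≤ α i := ciInf_le (Set.finite_range _).bddBelow i
  nlinarith [sq_nonneg (v i)]

end AuxLemmas

theorem stmt15 [NeZero n] (Q A : Matrix (Fin n) (Fin n) ℝ) (hQ : Q.PosDef)
    (r : Fin n → ℝ) (kQ : ℝ) (hkQ : kQ = maxEig hQ.1 / minEig hQ.1)
    (ε : ℝ) (hε : 0 < ε) (hε2 : ε < enorm2 r * kQ / spec Q)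
    (kD : ℝ) (hkD : 0 < kD)
    (α : Fin n → ℝ) (hA : A = Matrix.diagonal α) (hαpos : ∀ i, 0 < α i)
    (hQA : (Q + A).IsHermitian)
    (hαmax : (⨆ i, α i) < ε * spec Q ^ 2 / (enorm2 r * kQ ^ 2 - ε * spec Q * kQ))
    (hαmin : (⨅ i, α i) >
      spec Q * (kD⁻¹ - kQ⁻¹) + ε * spec Q ^ 2 / (kQ * kD * (enorm2 r * kQ - ε * spec Q))) :
    maxEig hQA / minEig hQA < kD := by
  haveI := stmt15aux_nonemptyFin (n := n)
  set L := maxEig hQ.1 with hL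
  set l := minEig hQ.1 with hl
  have hlpos : 0 < l := stmt15aux_minEig_pos hQ
  have hlL : l ≤ L := stmt15aux_min_le_max hQ.1
  have hLpos : 0 < L := hlpos.trans_le hlL
  have hspec : spec Q = L := stmt15aux_spec_eq_maxEig hQ
  have hkQpos : 0 < kQ := by rw [hkQ]; positivity
  have hlk : l * kQ = L := by rw [hkQ]; field_simp
  set R := enorm2 r with hR
  set amax := ⨆ i, α i with hamax
  set amin := ⨅ i, α i with hamin
  have haminpos : 0 < amin := by
    obtain ⟨j₀, hj₀⟩ := Finite.exists_min α
    have : amin = α j₀ := le_antisymm (ciInf_le (Set.finite_range _).bddBelow j₀) (le_ciInf hj₀)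
    rw [this]; exact hαpos j₀
  -- eigenvalue bounds for Q + A
  have hTadd : ∀ v : EuclideanSpace ℝ (Fin n),
      Matrix.toEuclideanLin (Q + A) v
        = Matrix.toEuclideanLin Q v + Matrix.toEuclideanLin A v := by
    intro v; rw [map_add]; rfl
  have hM1 : maxEig hQA ≤ L + amax := by
    obtain ⟨v, hv1, hvT⟩ := stmt15aux_exists_unit_max hQA
    rw [← hvT, hTadd v, inner_add_right]
    have h1 := stmt15aux_innerT_le hQ.1 v
    have h2 := stmt15aux_diag_le α v
    rw [hv1] at h1 h2
    rw [hA]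
    simpa using add_le_add (by simpa using h1) (by simpa using h2)
  have hMn : l + amin ≤ minEig hQA := by
    obtain ⟨v, hv1, hvT⟩ := stmt15aux_exists_unit_min hQA
    rw [← hvT, hTadd v, inner_add_right]
    have h1 := stmt15aux_le_innerT hQ.1 v
    have h2 := stmt15aux_le_diag α v
    rw [hv1] at h1 h2
    rw [hA]
    simpa using add_le_add (by simpa using h1) (by simpa using h2)
  -- arithmetic
  rw [hspec] at hε2 hαmax hαmin
  have hD : 0 < R * kQ - ε * L := by
    have h := (lt_div_iff₀ hLpos).mp hε2
    linarith
  set Mv := ε * L ^ 2 / (kQ * (R * kQ - ε * L)) with hMv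
  have hMvpos : 0 < Mv := by positivity
  have hamaxlt : amax < Mv := by
    have : R * kQ ^ 2 - ε * L * kQ = kQ * (R * kQ - ε * L) := by ring
    rw [hMv, ← this]
    exact hαmax
  have haminlt : L / kD - l + Mv / kD < amin := by
    have e1 : L * (kD⁻¹ - kQ⁻¹) = L / kD - L / kQ := by
      field_simp
    have e2 : L / kQ = l := by
      rw [← hlk]; field_simp
    have e3 : ε * L ^ 2 / (kQ * kD * (R * kQ - ε * L)) = Mv / kD := by
      rw [hMv, div_div]; ring_nf
    calc L / kD - l + Mv / kD = L * (kD⁻¹ - kQ⁻¹) + ε * L ^ 2 / (kQ * kD * (R * kQ - ε * L)) := by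
          rw [e1, e2, e3]
      _ < amin := hαmin
  have hMnpos : (L + Mv) / kD < minEig hQA := by
    have : (L + Mv) / kD = L / kD + Mv / kD := by ring
    linarith
  have hMnpos' : 0 < minEig hQA := lt_trans (by positivity) hMnpos
  rw [div_lt_iff₀ hMnpos']
  have : kD * ((L + Mv) / kD) < kD * minEig hQA := by
    exact (mul_lt_mul_iff_right₀ hkD).mpr hMnpos
  rw [mul_div_cancel₀ _ (ne_of_gt hkD)] at this
  linarith
end
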